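/- arXiv:2011.15057 — 8 statements merged into one kernel-verified Lean document; each statement's English description precedes it below -/
import Mathlib

section
/- The charge density converges to zero in L²: ∫_Ω |ρ_ε|² dx → 0 as ε → 0⁺. -/
open MeasureTheory Real Filter Set Topology

/-- The Laplacian: sum of second partial derivatives. -/
noncomputable def lap {d : ℕ} (f : EuclideanSpace ℝ (Fin d) → ℝ) (x : EuclideanSpace ℝ (Fin d)) : ℝ :=
  ∑ i : Fin d, fderiv ℝ (fun y => fderiv ℝ f y (EuclideanSpace.single i 1)) x (EuclideanSpace.single i 1)


/-- 1D second derivative test at a local max. -/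
lemma second_deriv_test {g g' : ℝ → ℝ} {a : ℝ}
    (h1 : ∀ᶠ t in 𝓝 (0:ℝ), HasDerivAt g (g' t) t)
    (h2 : HasDerivAt g' a 0)
    (hmax : IsLocalMax g 0) : a ≤ 0 := by
  by_contra hpos
  push_neg at hpos
  have hg'0 : g' 0 = 0 := by
    have hd : deriv g 0 = 0 := hmax.deriv_eq_zero
    have := (h1.self_of_nhds).deriv
    rw [← this, hd]
  -- slope of g' tends to a > 0
  have hslope : Tendsto (slope g' 0) (𝓝[≠] (0:ℝ)) (𝓝 a) :=
    hasDerivAt_iff_tendsto_slope.1 h2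
  have hev : ∀ᶠ t in 𝓝[≠] (0:ℝ), 0 < slope g' 0 t :=
    hslope.eventually (eventually_gt_nhds hpos)
  have hev' : ∀ᶠ t in 𝓝[>] (0:ℝ), 0 < g' t := by
    have : 𝓝[>] (0:ℝ) ≤ 𝓝[≠] (0:ℝ) := nhdsWithin_mono _ (fun t ht => ne_of_gt ht)
    filter_upwards [this hev, self_mem_nhdsWithin] with t ht ht'
    have heq : slope g' 0 t = g' t / t := by
      rw [slope_def_field, hg'0, sub_zero, sub_zero]
    rw [heq] at ht
    have := mul_pos ht (show (0:ℝ) < t from ht')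
    rwa [div_mul_cancel₀] at this
    exact ne_of_gt ht'
  -- get δ
  rcases (nhdsWithin_hasBasis (nhds_basis_Ioo_pos (0:ℝ)) _).eventually_iff.1 hev' with ⟨δ₁, hδ₁, hIoo⟩
  rcases (nhds_basis_Ioo_pos (0:ℝ)).eventually_iff.1 h1 with ⟨δ₂, hδ₂, hIoo₂⟩
  rcases (nhds_basis_Ioo_pos (0:ℝ)).eventually_iff.1 hmax with ⟨δ₃, hδ₃, hIoo₃⟩
  set δ := min δ₁ (min δ₂ δ₃) / 2 with hδdef
  have hδpos : 0 < δ := by positivity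
  have hmpos : 0 < min δ₁ (min δ₂ δ₃) := lt_min hδ₁ (lt_min hδ₂ hδ₃)
  have hm1 : min δ₁ (min δ₂ δ₃) ≤ δ₁ := min_le_left _ _
  have hm2 : min δ₁ (min δ₂ δ₃) ≤ δ₂ := (min_le_right _ _).trans (min_le_left _ _)
  have hm3 : min δ₁ (min δ₂ δ₃) ≤ δ₃ := (min_le_right _ _).trans (min_le_right _ _)
  have hδ1 : δ < δ₁ := by rw [hδdef]; linarith
  have hδ2 : δ < δ₂ := by rw [hδdef]; linarith
  have hδ3 : δ < δ₃ := by rw [hδdef]; linarith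
  -- g strictly mono on [0, δ]
  have hmono : StrictMonoOn g (Icc 0 δ) := by
    apply strictMonoOn_of_deriv_pos (convex_Icc _ _)
    · intro t ht
      rcases eq_or_lt_of_le ht.1 with h0 | h0
      · subst h0
        exact (h1.self_of_nhds).continuousAt.continuousWithinAt
      · refine ((hIoo₂ ?_).differentiableAt.continuousAt).continuousWithinAt
        constructor <;> [linarith [ht.2]; linarith [ht.2]]
    · intro t ht
      rw [interior_Icc] at ht
      have hd : HasDerivAt g (g' t) t := hIoo₂ ⟨by linarith [ht.1], by linarith [ht.2]⟩
      rw [hd.deriv]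
      exact hIoo ⟨⟨by linarith [ht.1], by linarith [ht.2]⟩, ht.1⟩
  have : g 0 < g δ := hmono (by constructor <;> simp [le_of_lt hδpos]) ⟨le_of_lt hδpos, le_refl δ⟩ hδpos
  have : g δ ≤ g 0 := hIoo₃ ⟨by linarith, by linarith⟩
  linarith

section SDT
variable {d : ℕ}

lemma line_hasDerivAt (z e : EuclideanSpace ℝ (Fin d)) (t : ℝ) :
    HasDerivAt (fun t : ℝ => z + t • e) e t := by
  simpa using ((hasDerivAt_id t).smul_const e).const_add z

/-- second partial derivative of a C² function along a line through z -/
lemma second_partial_line {h : EuclideanSpace ℝ (Fin d) → ℝ} {z e : EuclideanSpace ℝ (Fin d)}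
    {U : Set (EuclideanSpace ℝ (Fin d))} (hU : IsOpen U) (hz : z ∈ U)
    (hh : ContDiffOn ℝ 2 h U) :
    (∀ᶠ t in 𝓝 (0:ℝ), HasDerivAt (fun s : ℝ => h (z + s • e)) (fderiv ℝ h (z + t • e) e) t)
    ∧ HasDerivAt (fun t : ℝ => fderiv ℝ h (z + t • e) e)
        (fderiv ℝ (fun y => fderiv ℝ h y e) z e) 0 := by
  have hcont : Continuous (fun t : ℝ => z + t • e) := by continuity
  have h0 : (fun t : ℝ => z + t • e) 0 = z := by simp
  have htend : Tendsto (fun t : ℝ => z + t • e) (𝓝 0) (𝓝 z) := by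
    simpa using hcont.tendsto (0:ℝ)
  have hUev : ∀ᶠ t in 𝓝 (0:ℝ), z + t • e ∈ U := htend.eventually (hU.eventually_mem hz)
  constructor
  · filter_upwards [hUev] with t ht
    have hdiff : DifferentiableAt ℝ h (z + t • e) :=
      (hh.contDiffAt (hU.mem_nhds ht)).differentiableAt (by norm_num)
    have := hdiff.hasFDerivAt.comp_hasDerivAt t (line_hasDerivAt z e t)
    simpa [Function.comp_def] using this
  · -- second derivative
    have hC2 : ContDiffAt ℝ 2 h z := hh.contDiffAt (hU.mem_nhds hz)
    have hF : DifferentiableAt ℝ (fderiv ℝ h) z :=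
      (hC2.fderiv_right (m := 1) (by norm_num)).differentiableAt (by norm_num)
    have hFz : HasFDerivAt (fderiv ℝ h) (fderiv ℝ (fderiv ℝ h) z) z := hF.hasFDerivAt
    set ev : (EuclideanSpace ℝ (Fin d) →L[ℝ] ℝ) →L[ℝ] ℝ := ContinuousLinearMap.apply ℝ ℝ e with hev
    -- fderiv of y ↦ fderiv h y e
    have hcompF : HasFDerivAt (fun y => fderiv ℝ h y e) (ev.comp (fderiv ℝ (fderiv ℝ h) z)) z := by
      have := ev.hasFDerivAt.comp z hFz
      simpa [Function.comp_def, hev] using this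
    have hfe : fderiv ℝ (fun y => fderiv ℝ h y e) z e = (fderiv ℝ (fderiv ℝ h) z e) e := by
      rw [hcompF.fderiv]; rfl
    -- HasDerivAt of t ↦ fderiv h (z+t•e) e at 0
    have hline := line_hasDerivAt z e 0
    have hFz' : HasFDerivAt (fderiv ℝ h) (fderiv ℝ (fderiv ℝ h) z) ((fun t : ℝ => z + t • e) 0) := by
      rwa [h0]
    have hd1 : HasDerivAt (fun t : ℝ => fderiv ℝ h (z + t • e)) (fderiv ℝ (fderiv ℝ h) z e) 0 := by
      have := hFz'.comp_hasDerivAt 0 hline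
      simpa [Function.comp_def] using this
    have hd2 : HasDerivAt (fun t : ℝ => fderiv ℝ h (z + t • e) e) ((fderiv ℝ (fderiv ℝ h) z e) e) 0 := by
      have := ev.hasFDerivAt.comp_hasDerivAt 0 hd1
      simpa [Function.comp_def, hev] using this
    rwa [hfe]

end SDT

section SDT2
variable {d : ℕ}

/-- Second derivative test: at an interior local max of a C² function, lap ≤ 0. -/
lemma lap_nonpos_of_isLocalMax {h : EuclideanSpace ℝ (Fin d) → ℝ} {z : EuclideanSpace ℝ (Fin d)}
    {U : Set (EuclideanSpace ℝ (Fin d))} (hU : IsOpen U) (hz : z ∈ U)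
    (hh : ContDiffOn ℝ 2 h U) (hmax : IsLocalMax h z) : lap h z ≤ 0 := by
  apply Finset.sum_nonpos
  intro i _
  set e := EuclideanSpace.single i (1:ℝ)
  obtain ⟨h1, h2⟩ := second_partial_line (e := e) hU hz hh
  have hcont : Continuous (fun t : ℝ => z + t • e) := by continuity
  have htend : Tendsto (fun t : ℝ => z + t • e) (𝓝 0) (𝓝 z) := by
    simpa using hcont.tendsto (0:ℝ)
  have hgmax : IsLocalMax (fun s : ℝ => h (z + s • e)) 0 := by
    have := htend.eventually hmax
    simpa [IsLocalMax, IsMaxFilter] using this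
  exact second_deriv_test h1 h2 hgmax

end SDT2

section Calc
variable {d : ℕ} {U : Set (EuclideanSpace ℝ (Fin d))} {u : EuclideanSpace ℝ (Fin d) → ℝ}
  {x : EuclideanSpace ℝ (Fin d)}

lemma hasFDerivAt_fderiv_apply (hU : IsOpen U) (hx : x ∈ U) (hu : ContDiffOn ℝ 2 u U)
    (e : EuclideanSpace ℝ (Fin d)) :
    HasFDerivAt (fun y => fderiv ℝ u y e)
      ((ContinuousLinearMap.apply ℝ ℝ e).comp (fderiv ℝ (fderiv ℝ u) x)) x := by
  have hC2 : ContDiffAt ℝ 2 u x := hu.contDiffAt (hU.mem_nhds hx)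
  have hF : DifferentiableAt ℝ (fderiv ℝ u) x :=
    (hC2.fderiv_right (m := 1) (by norm_num)).differentiableAt (by norm_num)
  have := (ContinuousLinearMap.apply ℝ ℝ e).hasFDerivAt.comp x hF.hasFDerivAt
  simpa [Function.comp_def] using this

/-- chain rule for the Laplacian of f ∘ u at an interior point -/
lemma lap_comp (hU : IsOpen U) (hx : x ∈ U) (hu : ContDiffOn ℝ 2 u U)
    {f f' f'' : ℝ → ℝ} (hf : ∀ t, HasDerivAt f (f' t) t) (hf' : ∀ t, HasDerivAt f' (f'' t) t) :
    lap (fun y => f (u y)) x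
      = f'' (u x) * (∑ i : Fin d, (fderiv ℝ u x (EuclideanSpace.single i 1))^2)
        + f' (u x) * lap u x := by
  have hUev : ∀ᶠ y in 𝓝 x, y ∈ U := hU.eventually_mem hx
  have hdiff : ∀ y ∈ U, DifferentiableAt ℝ u y := fun y hy =>
    (hu.contDiffAt (hU.mem_nhds hy)).differentiableAt (by norm_num)
  have hstepA : ∀ y ∈ U, ∀ e, fderiv ℝ (fun z => f (u z)) y e = f' (u y) * fderiv ℝ u y e := by
    intro y hy e
    have h1 : HasFDerivAt (fun z => f (u z)) (f' (u y) • fderiv ℝ u y) y := by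
      have := (hf (u y)).comp_hasFDerivAt y (hdiff y hy).hasFDerivAt
      simpa [Function.comp_def] using this
    rw [h1.fderiv]; simp
  unfold lap
  rw [Finset.mul_sum, Finset.mul_sum, ← Finset.sum_add_distrib]
  apply Finset.sum_congr rfl
  intro i _
  set e := EuclideanSpace.single i (1:ℝ) with he
  -- replace inner function eventually
  have hcongr : (fun y => fderiv ℝ (fun z => f (u z)) y e) =ᶠ[𝓝 x]
      (fun y => f' (u y) * fderiv ℝ u y e) := by
    filter_upwards [hUev] with y hy using hstepA y hy e
  rw [hcongr.fderiv_eq]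
  -- product rule
  have hG1 : HasFDerivAt (fun y => f' (u y)) (f'' (u x) • fderiv ℝ u x) x := by
    have := (hf' (u x)).comp_hasFDerivAt x (hdiff x hx).hasFDerivAt
    simpa [Function.comp_def] using this
  have hG2 := hasFDerivAt_fderiv_apply hU hx hu e
  have hmul := hG1.fun_mul hG2
  rw [hmul.fderiv]
  have h2nd : fderiv ℝ (fun y => fderiv ℝ u y e) x = 
      (ContinuousLinearMap.apply ℝ ℝ e).comp (fderiv ℝ (fderiv ℝ u) x) := hG2.fderiv
  simp only [ContinuousLinearMap.add_apply, ContinuousLinearMap.smul_apply,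
    ContinuousLinearMap.coe_comp', Function.comp_apply, ContinuousLinearMap.apply_apply,
    smul_eq_mul]
  rw [h2nd]
  simp only [ContinuousLinearMap.coe_comp', Function.comp_apply, ContinuousLinearMap.apply_apply]
  ring

end Calc

section Barrier
variable {d : ℕ}

lemma hasFDerivAt_cosh_coord (b κ : ℝ) (q : EuclideanSpace ℝ (Fin d)) (j : Fin d)
    (y : EuclideanSpace ℝ (Fin d)) :
    HasFDerivAt (fun y : EuclideanSpace ℝ (Fin d) => b * Real.cosh (κ * (y j - q j)))
      ((b * κ * Real.sinh (κ * (y j - q j))) • (EuclideanSpace.proj j : EuclideanSpace ℝ (Fin d) →L[ℝ] ℝ)) y := by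
  have hinner : HasFDerivAt (fun y : EuclideanSpace ℝ (Fin d) => κ * (y j - q j))
      (κ • (EuclideanSpace.proj j : EuclideanSpace ℝ (Fin d) →L[ℝ] ℝ)) y := by
    have h1 : HasFDerivAt (fun y : EuclideanSpace ℝ (Fin d) => y j - q j)
        (EuclideanSpace.proj j : EuclideanSpace ℝ (Fin d) →L[ℝ] ℝ) y := by
      simpa using ((EuclideanSpace.proj j : EuclideanSpace ℝ (Fin d) →L[ℝ] ℝ).hasFDerivAt (x := y)).sub_const (q j)
    simpa using h1.const_mul κ
  have hcosh := (Real.hasDerivAt_cosh (κ * (y j - q j))).comp_hasFDerivAt y hinner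
  have := hcosh.const_mul b
  simpa [Function.comp_def, smul_smul, mul_comm, mul_assoc, mul_left_comm] using this

lemma hasFDerivAt_sinh_coord (c κ : ℝ) (q : EuclideanSpace ℝ (Fin d)) (j : Fin d)
    (y : EuclideanSpace ℝ (Fin d)) :
    HasFDerivAt (fun y : EuclideanSpace ℝ (Fin d) => c * Real.sinh (κ * (y j - q j)))
      ((c * κ * Real.cosh (κ * (y j - q j))) • (EuclideanSpace.proj j : EuclideanSpace ℝ (Fin d) →L[ℝ] ℝ)) y := by
  have hinner : HasFDerivAt (fun y : EuclideanSpace ℝ (Fin d) => κ * (y j - q j))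
      (κ • (EuclideanSpace.proj j : EuclideanSpace ℝ (Fin d) →L[ℝ] ℝ)) y := by
    have h1 : HasFDerivAt (fun y : EuclideanSpace ℝ (Fin d) => y j - q j)
        (EuclideanSpace.proj j : EuclideanSpace ℝ (Fin d) →L[ℝ] ℝ) y := by
      simpa using ((EuclideanSpace.proj j : EuclideanSpace ℝ (Fin d) →L[ℝ] ℝ).hasFDerivAt (x := y)).sub_const (q j)
    simpa using h1.const_mul κ
  have hsinh := (Real.hasDerivAt_sinh (κ * (y j - q j))).comp_hasFDerivAt y hinner
  have := hsinh.const_mul c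
  simpa [Function.comp_def, smul_smul, mul_comm, mul_assoc, mul_left_comm] using this

/-- Laplacian of the cosh barrier. -/
lemma lap_barrier (b κ : ℝ) (q : EuclideanSpace ℝ (Fin d)) (x : EuclideanSpace ℝ (Fin d)) :
    lap (fun y => b * ∑ j : Fin d, Real.cosh (κ * (y j - q j))) x
      = κ^2 * (b * ∑ j : Fin d, Real.cosh (κ * (x j - q j))) := by
  have hφ : ∀ y : EuclideanSpace ℝ (Fin d), HasFDerivAt
      (fun y : EuclideanSpace ℝ (Fin d) => b * ∑ j : Fin d, Real.cosh (κ * (y j - q j)))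
      (∑ j : Fin d, (b * κ * Real.sinh (κ * (y j - q j))) • (EuclideanSpace.proj j : EuclideanSpace ℝ (Fin d) →L[ℝ] ℝ)) y := by
    intro y
    have : HasFDerivAt (fun y : EuclideanSpace ℝ (Fin d) => ∑ j : Fin d, b * Real.cosh (κ * (y j - q j)))
        (∑ j : Fin d, (b * κ * Real.sinh (κ * (y j - q j))) • (EuclideanSpace.proj j : EuclideanSpace ℝ (Fin d) →L[ℝ] ℝ)) y :=
      HasFDerivAt.fun_sum (fun j _ => hasFDerivAt_cosh_coord b κ q j y)
    simpa [Finset.mul_sum] using this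
  have hfd : ∀ (y : EuclideanSpace ℝ (Fin d)) (i : Fin d),
      fderiv ℝ (fun y : EuclideanSpace ℝ (Fin d) => b * ∑ j : Fin d, Real.cosh (κ * (y j - q j))) y
        (EuclideanSpace.single i 1) = b * κ * Real.sinh (κ * (y i - q i)) := by
    intro y i
    rw [(hφ y).fderiv]
    simp only [ContinuousLinearMap.coe_sum', Finset.sum_apply, ContinuousLinearMap.smul_apply,
      PiLp.proj_apply, smul_eq_mul]
    rw [Finset.sum_eq_single i]
    · simp
    · intro j _ hji
      simp [EuclideanSpace.single_apply, hji]
    · simp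
  unfold lap
  rw [Finset.mul_sum, Finset.mul_sum]
  apply Finset.sum_congr rfl
  intro i _
  have hcongr : (fun y : EuclideanSpace ℝ (Fin d) =>
        fderiv ℝ (fun z : EuclideanSpace ℝ (Fin d) => b * ∑ j : Fin d, Real.cosh (κ * (z j - q j))) y
        (EuclideanSpace.single i 1))
      = (fun y : EuclideanSpace ℝ (Fin d) => b * κ * Real.sinh (κ * (y i - q i))) := by
    funext y; exact hfd y i
  rw [hcongr, (hasFDerivAt_sinh_coord (b * κ) κ q i x).fderiv]
  simp [EuclideanSpace.single_apply]
  ring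

/-- lap of a difference -/
lemma lap_sub {F G : EuclideanSpace ℝ (Fin d) → ℝ} {x : EuclideanSpace ℝ (Fin d)}
    (hFd : ∀ᶠ y in 𝓝 x, DifferentiableAt ℝ F y) (hGd : ∀ᶠ y in 𝓝 x, DifferentiableAt ℝ G y)
    (hF2 : ∀ i : Fin d, DifferentiableAt ℝ (fun y => fderiv ℝ F y (EuclideanSpace.single i 1)) x)
    (hG2 : ∀ i : Fin d, DifferentiableAt ℝ (fun y => fderiv ℝ G y (EuclideanSpace.single i 1)) x) :
    lap (fun y => F y - G y) x = lap F x - lap G x := by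
  unfold lap
  rw [← Finset.sum_sub_distrib]
  apply Finset.sum_congr rfl
  intro i _
  set e := EuclideanSpace.single i (1:ℝ)
  have hcongr : (fun y => fderiv ℝ (fun z => F z - G z) y e) =ᶠ[𝓝 x]
      (fun y => fderiv ℝ F y e - fderiv ℝ G y e) := by
    filter_upwards [hFd, hGd] with y hFy hGy
    rw [fderiv_fun_sub hFy hGy]; rfl
  rw [hcongr.fderiv_eq, fderiv_fun_sub (hF2 i) (hG2 i)]
  rfl

end Barrier

section Helpers
variable {d : ℕ}

lemma hasFDerivAt_barrier (b κ : ℝ) (q : EuclideanSpace ℝ (Fin d)) (y : EuclideanSpace ℝ (Fin d)) :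
    HasFDerivAt (fun y : EuclideanSpace ℝ (Fin d) => b * ∑ j : Fin d, Real.cosh (κ * (y j - q j)))
      (∑ j : Fin d, (b * κ * Real.sinh (κ * (y j - q j))) • (EuclideanSpace.proj j : EuclideanSpace ℝ (Fin d) →L[ℝ] ℝ)) y := by
  have : HasFDerivAt (fun y : EuclideanSpace ℝ (Fin d) => ∑ j : Fin d, b * Real.cosh (κ * (y j - q j)))
      (∑ j : Fin d, (b * κ * Real.sinh (κ * (y j - q j))) • (EuclideanSpace.proj j : EuclideanSpace ℝ (Fin d) →L[ℝ] ℝ)) y :=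
    HasFDerivAt.fun_sum (fun j _ => hasFDerivAt_cosh_coord b κ q j y)
  simpa [Finset.mul_sum] using this

lemma fderiv_barrier_apply (b κ : ℝ) (q : EuclideanSpace ℝ (Fin d)) (y : EuclideanSpace ℝ (Fin d)) (i : Fin d) :
    fderiv ℝ (fun y : EuclideanSpace ℝ (Fin d) => b * ∑ j : Fin d, Real.cosh (κ * (y j - q j))) y
      (EuclideanSpace.single i 1) = b * κ * Real.sinh (κ * (y i - q i)) := by
  rw [(hasFDerivAt_barrier b κ q y).fderiv]
  simp only [ContinuousLinearMap.coe_sum', Finset.sum_apply, ContinuousLinearMap.smul_apply,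
    PiLp.proj_apply, smul_eq_mul]
  rw [Finset.sum_eq_single i]
  · simp
  · intro j _ hji
    simp [EuclideanSpace.single_apply, hji]
  · simp

/-- differentiability of the first partials of f ∘ u -/
lemma diff_fderiv_comp_apply {U : Set (EuclideanSpace ℝ (Fin d))} {u : EuclideanSpace ℝ (Fin d) → ℝ}
    {x : EuclideanSpace ℝ (Fin d)} (hU : IsOpen U) (hx : x ∈ U) (hu : ContDiffOn ℝ 2 u U)
    {f f' f'' : ℝ → ℝ} (hf : ∀ t, HasDerivAt f (f' t) t) (hf' : ∀ t, HasDerivAt f' (f'' t) t)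
    (e : EuclideanSpace ℝ (Fin d)) :
    DifferentiableAt ℝ (fun y => fderiv ℝ (fun z => f (u z)) y e) x := by
  have hdiff : ∀ y ∈ U, DifferentiableAt ℝ u y := fun y hy =>
    (hu.contDiffAt (hU.mem_nhds hy)).differentiableAt (by norm_num)
  have hcongr : (fun y => fderiv ℝ (fun z => f (u z)) y e) =ᶠ[𝓝 x]
      (fun y => f' (u y) * fderiv ℝ u y e) := by
    filter_upwards [hU.eventually_mem hx] with y hy
    have h1 : HasFDerivAt (fun z => f (u z)) (f' (u y) • fderiv ℝ u y) y := by
      have := (hf (u y)).comp_hasFDerivAt y (hdiff y hy).hasFDerivAt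
      simpa [Function.comp_def] using this
    rw [h1.fderiv]; simp
  rw [hcongr.differentiableAt_iff]
  have hG1 : HasFDerivAt (fun y => f' (u y)) (f'' (u x) • fderiv ℝ u x) x := by
    have := (hf' (u x)).comp_hasFDerivAt x (hdiff x hx).hasFDerivAt
    simpa [Function.comp_def] using this
  exact (hG1.mul (hasFDerivAt_fderiv_apply hU hx hu e)).differentiableAt

/-- derivative facts for the Boltzmann nonlinearity -/
lemma hasDerivAt_boltz (I₀ a b : ℝ) (t : ℝ) :
    HasDerivAt (fun t : ℝ => I₀ * (exp (-t)/a - exp t/b))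
      (-(I₀ * (exp (-t)/a + exp t/b))) t := by
  have h1 : HasDerivAt (fun t : ℝ => exp (-t)) (-exp (-t)) t := by
    have := (Real.hasDerivAt_exp (-t)).comp t (hasDerivAt_neg t)
    simpa [Function.comp_def] using this
  have h2 := ((h1.div_const a).fun_sub ((Real.hasDerivAt_exp t).div_const b)).const_mul I₀
  refine h2.congr_deriv ?_
  ring

lemma hasDerivAt_boltz' (I₀ a b : ℝ) (t : ℝ) :
    HasDerivAt (fun t : ℝ => -(I₀ * (exp (-t)/a + exp t/b)))
      (I₀ * (exp (-t)/a - exp t/b)) t := by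
  have h1 : HasDerivAt (fun t : ℝ => exp (-t)) (-exp (-t)) t := by
    have := (Real.hasDerivAt_exp (-t)).comp t (hasDerivAt_neg t)
    simpa [Function.comp_def] using this
  have h2 := (((h1.div_const a).fun_add ((Real.hasDerivAt_exp t).div_const b)).const_mul I₀).neg
  refine h2.congr_deriv ?_
  ring

/-- the closed box is compact -/
lemma box_isCompact (x : EuclideanSpace ℝ (Fin d)) (s : ℝ) :
    IsCompact {y : EuclideanSpace ℝ (Fin d) | ∀ j, |y j - x j| ≤ s} := by
  apply Metric.isCompact_of_isClosed_isBounded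
  · have : {y : EuclideanSpace ℝ (Fin d) | ∀ j, |y j - x j| ≤ s}
        = ⋂ j, {y : EuclideanSpace ℝ (Fin d) | |y j - x j| ≤ s} := by
      ext y; simp [Set.mem_iInter]
    rw [this]
    exact isClosed_iInter fun j => isClosed_le
      (((EuclideanSpace.proj j).continuous.sub continuous_const).abs) continuous_const
  · apply Bornology.IsBounded.subset (Metric.isBounded_closedBall (x := x) (r := Real.sqrt d * |s|))
    intro y hy
    simp only [Metric.mem_closedBall]
    rw [dist_eq_norm, EuclideanSpace.norm_eq]
    have hsum : ∑ j : Fin d, ‖(y - x) j‖^2 ≤ d * s^2 := by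
      calc ∑ j : Fin d, ‖(y - x) j‖^2 ≤ ∑ _j : Fin d, s^2 := by
            apply Finset.sum_le_sum
            intro j _
            have : ‖(y - x) j‖ = |y j - x j| := by
              simp [Real.norm_eq_abs]
            rw [this, sq_abs]
            have h := hy j
            nlinarith [abs_nonneg (y j - x j), sq_abs (y j - x j)]
        _ = d * s^2 := by simp [Finset.sum_const]; try ring
    calc Real.sqrt (∑ j : Fin d, ‖(y - x) j‖^2) ≤ Real.sqrt (d * s^2) := Real.sqrt_le_sqrt hsum
      _ = Real.sqrt d * |s| := by
          rw [Real.sqrt_mul (by positivity), Real.sqrt_sq_eq_abs]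

/-- the box is inside a metric ball of controlled radius -/
lemma box_subset_ball {x : EuclideanSpace ℝ (Fin d)} {s r : ℝ} (hs : 0 ≤ s)
    (hr : Real.sqrt d * s < r) :
    {y : EuclideanSpace ℝ (Fin d) | ∀ j, |y j - x j| ≤ s} ⊆ Metric.ball x r := by
  intro y hy
  simp only [Metric.mem_ball]
  rw [dist_eq_norm, EuclideanSpace.norm_eq]
  have hsum : ∑ j : Fin d, ‖(y - x) j‖^2 ≤ d * s^2 := by
    calc ∑ j : Fin d, ‖(y - x) j‖^2 ≤ ∑ _j : Fin d, s^2 := by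
          apply Finset.sum_le_sum
          intro j _
          have : ‖(y - x) j‖ = |y j - x j| := by simp [Real.norm_eq_abs]
          rw [this, sq_abs]
          have h := hy j
          nlinarith [abs_nonneg (y j - x j), sq_abs (y j - x j)]
      _ = d * s^2 := by simp [Finset.sum_const]; try ring
  calc Real.sqrt (∑ j : Fin d, ‖(y - x) j‖^2) ≤ Real.sqrt (d * s^2) := Real.sqrt_le_sqrt hsum
    _ = Real.sqrt d * s := by
        rw [Real.sqrt_mul (by positivity), Real.sqrt_sq hs]
    _ < r := hr

end Helpers

section MaxPrin
variable {d : ℕ} {Ω : Set (EuclideanSpace ℝ (Fin d))}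

lemma frontier_nonempty (hd0 : 0 < d) (hΩne : Ω.Nonempty) (hΩbdd : Bornology.IsBounded Ω) :
    (frontier Ω).Nonempty := by
  haveI : Nonempty (Fin d) := ⟨⟨0, hd0⟩⟩
  haveI : Nontrivial (EuclideanSpace ℝ (Fin d)) := inferInstance
  by_contra hfr
  rw [Set.not_nonempty_iff_eq_empty] at hfr
  have hclopen : IsClopen Ω := isClopen_iff_frontier_eq_empty.2 hfr
  rcases isClopen_iff.1 hclopen with h | h
  · exact hΩne.ne_empty h
  · exact NormedSpace.unbounded_univ ℝ (EuclideanSpace ℝ (Fin d)) (h ▸ hΩbdd)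

/-- strict integral bound : if g ≥ c on open Ω and g x₁ > c at a point, ∫_Ω g > c⬝|Ω| -/
lemma strict_setIntegral_gt (hΩopen : IsOpen Ω) {g : EuclideanSpace ℝ (Fin d) → ℝ} {c : ℝ}
    (hgc : ContinuousOn g Ω) (hge : ∀ y ∈ Ω, c ≤ g y) {x₁ : EuclideanSpace ℝ (Fin d)}
    (hx : x₁ ∈ Ω) (hgt : c < g x₁) (hgint : IntegrableOn g Ω)
    (hfin : volume Ω < ⊤) :
    c * (volume Ω).toReal < ∫ y in Ω, g y := by
  set η := (g x₁ - c)/2 with hη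
  have hηpos : 0 < η := by simp [hη]; linarith
  have hca : ContinuousAt g x₁ := hgc.continuousAt (hΩopen.mem_nhds hx)
  have hev : ∀ᶠ y in 𝓝 x₁, c + η < g y := by
    have : c + η < g x₁ := by simp [hη]; linarith
    exact hca.eventually_const_lt this
  obtain ⟨r, hrpos, hball⟩ := Metric.eventually_nhds_iff_ball.1 (hev.and (hΩopen.eventually_mem hx))
  set B := Metric.ball x₁ r ∩ Ω with hB
  have hBopen : IsOpen B := Metric.isOpen_ball.inter hΩopen
  have hBsub : B ⊆ Ω := Set.inter_subset_right
  have hBne : B.Nonempty := ⟨x₁, Metric.mem_ball_self hrpos, hx⟩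
  have hBmeas : MeasurableSet B := hBopen.measurableSet
  have hBvolpos : 0 < (volume B).toReal := by
    refine ENNReal.toReal_pos (hBopen.measure_ne_zero volume hBne) ?_
    exact ne_of_lt (lt_of_le_of_lt (measure_mono hBsub) hfin)
  have hsplit : Ω = B ∪ (Ω \ B) := by
    rw [Set.union_diff_cancel hBsub]
  have hmeas2 : MeasurableSet (Ω \ B) := hΩopen.measurableSet.diff hBmeas
  have hint1 : IntegrableOn g B volume := hgint.mono_set hBsub
  have hint2 : IntegrableOn g (Ω \ B) volume := hgint.mono_set Set.diff_subset
  have hne1 : volume B ≠ ⊤ := (lt_of_le_of_lt (measure_mono hBsub) hfin).ne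
  have hne2 : volume (Ω \ B) ≠ ⊤ := (lt_of_le_of_lt (measure_mono Set.diff_subset) hfin).ne
  have hIsplit : ∫ y in Ω, g y = (∫ y in B, g y) + ∫ y in Ω \ B, g y := by
    have h := setIntegral_union (μ := volume) (f := g) (Set.disjoint_sdiff_right (s := B) (t := Ω)) hmeas2 hint1 hint2
    rwa [Set.union_diff_cancel hBsub] at h
  have hI1 : (c + η) * (volume B).toReal ≤ ∫ y in B, g y := by
    apply setIntegral_ge_of_const_le_real hBmeas hne1
    · intro y hy
      exact le_of_lt (hball y hy.1).1
    · exact hint1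
  have hI2 : c * (volume (Ω \ B)).toReal ≤ ∫ y in Ω \ B, g y := by
    apply setIntegral_ge_of_const_le_real hmeas2 hne2
    · intro y hy; exact hge y hy.1
    · exact hint2
  have hvol : (volume Ω).toReal = (volume B).toReal + (volume (Ω \ B)).toReal := by
    have h : volume Ω = volume B + volume (Ω \ B) := by
      conv_lhs => rw [hsplit]
      exact measure_union (Set.disjoint_sdiff_right) hmeas2
    rw [h, ENNReal.toReal_add hne1 hne2]
  rw [hIsplit, hvol]
  have := mul_pos hηpos hBvolpos
  nlinarith [hI1, hI2]

end MaxPrin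

section MaxSide
variable {d : ℕ} {Ω : Set (EuclideanSpace ℝ (Fin d))}

/-- one-sided maximum principle for the nonlocal PB equation -/
lemma max_side (hd0 : 0 < d) (hΩopen : IsOpen Ω) (hΩne : Ω.Nonempty)
    (hΩbdd : Bornology.IsBounded Ω)
    {u W : EuclideanSpace ℝ (Fin d) → ℝ} {ε I₀ C : ℝ}
    (hε : 0 < ε) (hI₀ : 0 < I₀)
    (hu2 : ContDiffOn ℝ 2 u Ω) (hu1 : ContDiffOn ℝ 1 u (closure Ω))
    (hPB : ∀ x ∈ Ω, -ε * lap u x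
      = I₀ * (exp (-(u x)) / (∫ y in Ω, exp (-(u y))) - exp (u x) / (∫ y in Ω, exp (u y))))
    (hbc : ∀ x ∈ frontier Ω, u x = W x) (hC : ∀ x, |W x| ≤ C) :
    ∀ x ∈ closure Ω, u x ≤ C := by
  have hK : IsCompact (closure Ω) :=
    Metric.isCompact_of_isClosed_isBounded isClosed_closure hΩbdd.closure
  have hKne : (closure Ω).Nonempty := hΩne.closure
  have hucont : ContinuousOn u (closure Ω) := hu1.continuousOn
  obtain ⟨x₀, hx₀K, hmax⟩ := hK.exists_isMaxOn hKne hucont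
  set M := u x₀ with hM
  suffices hMC : M ≤ C by
    intro x hx; exact le_trans (hmax hx) hMC
  by_cases hx₀ : x₀ ∈ Ω
  · -- interior max
    by_cases hconst : ∀ x ∈ Ω, u x = M
    · -- u constant on Ω; use boundary
      obtain ⟨p, hp⟩ := frontier_nonempty hd0 hΩne hΩbdd
      have hpcl : p ∈ closure Ω := by
        have : frontier Ω ⊆ closure Ω := frontier_subset_closure
        exact this hp
      have hupM : u p = M := by
        have hnb : (𝓝[Ω] p).NeBot := mem_closure_iff_nhdsWithin_neBot.1 hpcl
        have h1 : Tendsto u (𝓝[Ω] p) (𝓝 (u p)) :=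
          (hucont.continuousWithinAt hpcl).mono subset_closure
        have h2 : Tendsto u (𝓝[Ω] p) (𝓝 M) := by
          apply Tendsto.congr' _ tendsto_const_nhds
          filter_upwards [self_mem_nhdsWithin] with y hy using (hconst y hy).symm
        exact tendsto_nhds_unique h1 h2
      rw [← hupM, hbc p hp]
      exact le_trans (le_abs_self _) (hC p)
    · -- nonconstant: contradiction via strict integral bound
      exfalso
      push_neg at hconst
      obtain ⟨x₁, hx₁, hne⟩ := hconst
      have hx₁M : u x₁ < M := lt_of_le_of_ne (hmax (subset_closure hx₁)) hne
      -- local max, so lap ≤ 0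
      have hlocmax : IsLocalMax u x₀ := by
        filter_upwards [hΩopen.eventually_mem hx₀] with y hy
        exact hmax (subset_closure hy)
      have hlap : lap u x₀ ≤ 0 := lap_nonpos_of_isLocalMax hΩopen hx₀ hu2 hlocmax
      -- integrals
      have hfin : volume Ω < ⊤ :=
        lt_of_le_of_lt (measure_mono subset_closure) hK.measure_lt_top
      have hvolpos : 0 < (volume Ω).toReal :=
        ENNReal.toReal_pos (hΩopen.measure_ne_zero volume hΩne) (ne_of_lt (lt_of_le_of_lt (measure_mono subset_closure) hK.measure_lt_top))
      have hintm : IntegrableOn (fun y => exp (-(u y))) Ω volume :=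
        IntegrableOn.mono_set
          ((continuous_exp.comp_continuousOn hucont.neg).integrableOn_compact hK) subset_closure
      have hintp : IntegrableOn (fun y => exp (u y)) Ω volume :=
        IntegrableOn.mono_set
          ((continuous_exp.comp_continuousOn hucont).integrableOn_compact hK) subset_closure
      set A := ∫ y in Ω, exp (-(u y)) with hA
      set B := ∫ y in Ω, exp (u y) with hB
      have hAgt : exp (-M) * (volume Ω).toReal < A := by
        apply strict_setIntegral_gt hΩopen
          (continuous_exp.comp_continuousOn (hucont.mono subset_closure).neg)
          (fun y hy => exp_le_exp.2 (neg_le_neg (hmax (subset_closure hy)))) hx₁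
          (exp_lt_exp.2 (neg_lt_neg hx₁M)) hintm hfin
      have hBle : B ≤ exp M * (volume Ω).toReal := by
        calc B ≤ ∫ _y in Ω, exp M :=
              setIntegral_mono_on hintp (integrableOn_const hfin.ne)
                hΩopen.measurableSet (fun y hy => exp_le_exp.2 (hmax (subset_closure hy)))
          _ = exp M * (volume Ω).toReal := by
              rw [setIntegral_const, smul_eq_mul, mul_comm, measureReal_def]
      obtain ⟨xm, hxmK, hmin⟩ := hK.exists_isMinOn hKne hucont
      have hBpos : 0 < B := by
        have h : exp (u xm) * (volume Ω).toReal ≤ B := by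
          apply setIntegral_ge_of_const_le_real hΩopen.measurableSet hfin.ne
            (fun y hy => exp_le_exp.2 (hmin (subset_closure hy))) hintp
        have : 0 < exp (u xm) * (volume Ω).toReal := by positivity
        linarith
      have hApos : 0 < A := by
        have : 0 < exp (-M) * (volume Ω).toReal := by positivity
        linarith
      have hPB0 := hPB x₀ hx₀
      have hfge : 0 ≤ I₀ * (exp (-M) / A - exp M / B) := by
        rw [hM, ← hPB0]
        nlinarith [hlap, hε]
      have h1 : exp M / B ≤ exp (-M) / A := by
        have h2 := (mul_nonneg_iff_of_pos_left hI₀).1 hfge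
        linarith
      have h2 : exp (-M) / A < 1 / (volume Ω).toReal := by
        rw [div_lt_div_iff₀ hApos hvolpos]
        linarith [hAgt]
      have h3 : 1 / (volume Ω).toReal ≤ exp M / B := by
        rw [div_le_div_iff₀ hvolpos hBpos]
        linarith [hBle]
      linarith
  · have hx₀f : x₀ ∈ frontier Ω := by
      rw [frontier, hΩopen.interior_eq]
      exact ⟨hx₀K, hx₀⟩
    rw [hM, hbc x₀ hx₀f]
    exact le_trans (le_abs_self _) (hC x₀)

end MaxSide

section Decay
variable {d : ℕ} {Ω : Set (EuclideanSpace ℝ (Fin d))}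

/-- one-sided interior decay estimate via barrier comparison -/
lemma decay_side (hΩopen : IsOpen Ω)
    {u : EuclideanSpace ℝ (Fin d) → ℝ} {ε I₀ a b C₁ c₀ κ : ℝ}
    (hε : 0 < ε) (hI₀ : 0 < I₀)
    (hu2 : ContDiffOn ℝ 2 u Ω)
    (hPB : ∀ y ∈ Ω, -ε * lap u y = I₀ * (exp (-(u y))/a - exp (u y)/b))
    (hρbd : ∀ y ∈ Ω, |I₀ * (exp (-(u y))/a - exp (u y)/b)| ≤ C₁)
    (hc₀ : ∀ y ∈ Ω, c₀ ≤ I₀ * (exp (-(u y))/a + exp (u y)/b))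
    (hc₀pos : 0 < c₀) (hκpos : 0 < κ) (hκsq : κ^2 * ε = c₀)
    {x : EuclideanSpace ℝ (Fin d)} (hx : x ∈ Ω) {s : ℝ} (hs : 0 < s)
    (hbox : {y : EuclideanSpace ℝ (Fin d) | ∀ j, |y j - x j| ≤ s} ⊆ Ω) :
    I₀ * (exp (-(u x))/a - exp (u x)/b) ≤ (d * C₁) / Real.cosh (κ * s) := by
  classical
  set Q := {y : EuclideanSpace ℝ (Fin d) | ∀ j, |y j - x j| ≤ s} with hQ
  have hQcomp : IsCompact Q := box_isCompact x s
  have hxQ : x ∈ Q := by intro j; simp [abs_nonneg, le_of_lt hs, sub_self]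
  have hcoshpos : 0 < Real.cosh (κ * s) := Real.cosh_pos _
  set bb := C₁ / Real.cosh (κ * s) with hbb
  set φ : EuclideanSpace ℝ (Fin d) → ℝ :=
    fun y => bb * ∑ j : Fin d, Real.cosh (κ * (y j - x j)) with hφdef
  set ρf : EuclideanSpace ℝ (Fin d) → ℝ :=
    fun y => I₀ * (exp (-(u y))/a - exp (u y)/b) with hρf
  have hC₁0 : 0 ≤ C₁ := le_trans (abs_nonneg _) (hρbd x hx)
  have hucontΩ : ContinuousOn u Ω := hu2.continuousOn
  have hcontρ : ContinuousOn ρf Q := by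
    apply ContinuousOn.mono _ hbox
    exact continuousOn_const.mul
      (((continuous_exp.comp_continuousOn hucontΩ.neg).div_const a).sub
        ((continuous_exp.comp_continuousOn hucontΩ).div_const b))
  have hcontφ : Continuous φ := by
    apply continuous_const.mul
    apply continuous_finset_sum
    intro j _
    exact Real.continuous_cosh.comp
      (continuous_const.mul (((EuclideanSpace.proj j).continuous).sub continuous_const))
  obtain ⟨z, hzQ, hzmax⟩ := hQcomp.exists_isMaxOn ⟨x, hxQ⟩ (hcontρ.sub hcontφ.continuousOn)
  have hφx : φ x = d * C₁ / Real.cosh (κ * s) := by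
    simp only [hφdef, sub_self, mul_zero, Real.cosh_zero, Finset.sum_const, Finset.card_univ,
      Fintype.card_fin, nsmul_eq_mul, mul_one, hbb]
    ring
  have hφnn : ∀ y, 0 ≤ φ y := by
    intro y
    apply mul_nonneg (by positivity)
    exact Finset.sum_nonneg fun j _ => (Real.cosh_pos _).le
  by_cases hle : ρf z - φ z ≤ 0
  · have hxz : ρf x - φ x ≤ ρf z - φ z := hzmax hxQ
    rw [← hφx]
    have : ρf x ≤ φ x := by linarith
    exact this
  · exfalso
    push_neg at hle
    -- z is in the open box
    have hzΩ : z ∈ Ω := hbox hzQ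
    have hin : ∀ j, |z j - x j| < s := by
      intro j
      rcases lt_or_eq_of_le (hzQ j) with h | h
      · exact h
      · exfalso
        have hφz : C₁ ≤ φ z := by
          have h1 : Real.cosh (κ * (z j - x j)) = Real.cosh (κ * s) := by
            rw [← Real.cosh_abs, abs_mul, abs_of_pos hκpos, h]
          have h2 : Real.cosh (κ * s) ≤ ∑ j' : Fin d, Real.cosh (κ * (z j' - x j')) := by
            rw [← h1]
            exact Finset.single_le_sum (f := fun j' : Fin d => Real.cosh (κ * (z j' - x j')))
              (fun j' _ => (Real.cosh_pos _).le) (Finset.mem_univ j)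
          calc C₁ = bb * Real.cosh (κ * s) := by
                rw [hbb]; field_simp
            _ ≤ bb * ∑ j' : Fin d, Real.cosh (κ * (z j' - x j')) := by
                apply mul_le_mul_of_nonneg_left h2 (by positivity)
            _ = φ z := rfl
        have : ρf z ≤ C₁ := le_trans (le_abs_self _) (hρbd z hzΩ)
        linarith
    -- local max
    have hlocmax : IsLocalMax (fun y => ρf y - φ y) z := by
      have hVopen : IsOpen {y : EuclideanSpace ℝ (Fin d) | ∀ j, |y j - x j| < s} := by
        have : {y : EuclideanSpace ℝ (Fin d) | ∀ j, |y j - x j| < s}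
            = ⋂ j, {y : EuclideanSpace ℝ (Fin d) | |y j - x j| < s} := by
          ext y; simp [Set.mem_iInter]
        rw [this]
        exact isOpen_iInter_of_finite fun j =>
          isOpen_lt (((EuclideanSpace.proj j).continuous.sub continuous_const).abs) continuous_const
      filter_upwards [hVopen.mem_nhds hin] with y hy
      exact hzmax (fun j => (hy j).le)
    -- C² data
    have hfC : ContDiff ℝ 2 (fun t : ℝ => I₀ * (exp (-t)/a - exp t/b)) :=
      contDiff_const.mul (((Real.contDiff_exp.comp contDiff_neg).div_const a).sub
        (Real.contDiff_exp.div_const b))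
    have hρC2 : ContDiffOn ℝ 2 ρf Ω := hfC.comp_contDiffOn hu2
    have hφC2 : ContDiff ℝ 2 φ := by
      apply contDiff_const.mul
      apply ContDiff.sum
      intro j _
      exact Real.contDiff_cosh.comp
        (contDiff_const.mul (((EuclideanSpace.proj j : EuclideanSpace ℝ (Fin d) →L[ℝ] ℝ).contDiff).sub contDiff_const))
    have hsub : ContDiffOn ℝ 2 (fun y => ρf y - φ y) Ω := hρC2.sub hφC2.contDiffOn
    have hSDT : lap (fun y => ρf y - φ y) z ≤ 0 :=
      lap_nonpos_of_isLocalMax hΩopen hzΩ hsub hlocmax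
    -- split the laplacian
    have hf := hasDerivAt_boltz I₀ a b
    have hf' := hasDerivAt_boltz' I₀ a b
    have hdiffu : ∀ y ∈ Ω, DifferentiableAt ℝ u y := fun y hy =>
      (hu2.contDiffAt (hΩopen.mem_nhds hy)).differentiableAt (by norm_num)
    have hFd : ∀ᶠ y in 𝓝 z, DifferentiableAt ℝ ρf y := by
      filter_upwards [hΩopen.eventually_mem hzΩ] with y hy
      rw [hρf]
      have := ((hf (u y)).comp_hasFDerivAt y (hdiffu y hy).hasFDerivAt).differentiableAt
      simpa [Function.comp_def] using this
    have hGd : ∀ᶠ y in 𝓝 z, DifferentiableAt ℝ φ y :=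
      Eventually.of_forall fun y => (hasFDerivAt_barrier bb κ x y).differentiableAt
    have hF2 : ∀ i : Fin d, DifferentiableAt ℝ
        (fun y => fderiv ℝ ρf y (EuclideanSpace.single i 1)) z := by
      intro i
      rw [hρf]
      exact diff_fderiv_comp_apply hΩopen hzΩ hu2 hf hf' _
    have hG2 : ∀ i : Fin d, DifferentiableAt ℝ
        (fun y => fderiv ℝ φ y (EuclideanSpace.single i 1)) z := by
      intro i
      have heq : (fun y => fderiv ℝ φ y (EuclideanSpace.single i 1))
          = fun y => bb * κ * Real.sinh (κ * (y i - x i)) := by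
        funext y; exact fderiv_barrier_apply bb κ x y i
      rw [heq]
      exact (hasFDerivAt_sinh_coord (bb * κ) κ x i z).differentiableAt
    have hlapsplit : lap (fun y => ρf y - φ y) z = lap ρf z - lap φ z :=
      lap_sub hFd hGd hF2 hG2
    -- laplacian of ρf
    have hlapρ : lap ρf z
        = (I₀ * (exp (-(u z))/a - exp (u z)/b)) * (∑ i : Fin d, (fderiv ℝ u z (EuclideanSpace.single i 1))^2)
          + (-(I₀ * (exp (-(u z))/a + exp (u z)/b))) * lap u z := by
      rw [hρf]
      exact lap_comp hΩopen hzΩ hu2 hf hf'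
    have hlapφ : lap φ z = κ^2 * φ z := by
      rw [hφdef]
      exact lap_barrier bb κ x z
    -- lap u from the PDE
    have hρzf : ρf z = I₀ * (exp (-(u z))/a - exp (u z)/b) := rfl
    have hlapu : lap u z = -(ρf z)/ε := by
      have h := hPB z hzΩ
      rw [hρzf]
      field_simp
      linarith [h]
    -- positivity of ρf z
    have hρzpos : 0 < ρf z := by
      have := hφnn z
      linarith
    -- inequality for lap ρf
    have hSnn : 0 ≤ ∑ i : Fin d, (fderiv ℝ u z (EuclideanSpace.single i 1))^2 :=
      Finset.sum_nonneg fun i _ => sq_nonneg _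
    have hc₀z := hc₀ z hzΩ
    have hlapρ_ge : c₀/ε * ρf z ≤ lap ρf z := by
      rw [hlapρ, hlapu]
      rw [← hρzf]
      have h1 : 0 ≤ ρf z * (∑ i : Fin d, (fderiv ℝ u z (EuclideanSpace.single i 1))^2) :=
        mul_nonneg hρzpos.le hSnn
      have h2 : c₀/ε * ρf z ≤ (I₀ * (exp (-(u z))/a + exp (u z)/b)) * (ρf z / ε) := by
        have hh : c₀ * (ρf z/ε) ≤ (I₀ * (exp (-(u z))/a + exp (u z)/b)) * (ρf z/ε) :=
          mul_le_mul_of_nonneg_right hc₀z (by positivity)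
        calc c₀/ε * ρf z = c₀ * (ρf z/ε) := by ring
          _ ≤ _ := hh
      have h3 : (-(I₀ * (exp (-(u z))/a + exp (u z)/b))) * (-(ρf z)/ε)
          = (I₀ * (exp (-(u z))/a + exp (u z)/b)) * (ρf z / ε) := by ring
      rw [h3]
      linarith
    -- contradiction
    have hκ2 : κ^2 = c₀/ε := by field_simp [← hκsq]; exact hκsq
    have hφQ : φ z < ρf z := by linarith
    have : lap ρf z - lap φ z > 0 := by
      rw [hlapφ, hκ2]
      have : c₀/ε * φ z < c₀/ε * ρf z := by
        apply mul_lt_mul_of_pos_left hφQ (by positivity)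
      linarith [hlapρ_ge]
    rw [hlapsplit] at hSDT
    linarith

end Decay

section MoreHelpers
variable {d : ℕ}

lemma lap_neg (u : EuclideanSpace ℝ (Fin d) → ℝ) (x : EuclideanSpace ℝ (Fin d)) :
    lap (fun y => -(u y)) x = -lap u x := by
  unfold lap
  rw [← Finset.sum_neg_distrib]
  apply Finset.sum_congr rfl
  intro i _
  have h1 : (fun y => fderiv ℝ (fun z => -(u z)) y (EuclideanSpace.single i (1:ℝ)))
      = fun y => -(fderiv ℝ u y (EuclideanSpace.single i 1)) := by
    funext y
    rw [fderiv_fun_neg]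
    rfl
  rw [h1, fderiv_fun_neg]
  simp

lemma tendsto_sqrt_atTop' : Tendsto Real.sqrt atTop atTop := by
  apply tendsto_atTop_atTop.2
  intro b
  exact ⟨b^2, fun a ha => le_trans (le_abs_self b)
    (by rw [← Real.sqrt_sq_eq_abs]; exact Real.sqrt_le_sqrt ha)⟩

lemma tendsto_cosh_atTop' : Tendsto Real.cosh atTop atTop := by
  apply tendsto_atTop_mono (fun t => ?_) (Real.tendsto_exp_atTop.atTop_div_const two_pos)
  rw [Real.cosh_eq]
  have := Real.exp_pos (-t)
  linarith

end MoreHelpers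

/-- The charge density converges to zero in L²:
`∫_Ω |ρ_ε|² dx → 0` as `ε → 0⁺`. -/
theorem charge_L2_convergence_blocking
    {d : ℕ} (hd : d = 2 ∨ d = 3)
    (Ω : Set (EuclideanSpace ℝ (Fin d)))
    (hΩopen : IsOpen Ω) (hΩne : Ω.Nonempty) (hΩbdd : Bornology.IsBounded Ω)
    (hΩconn : IsConnected Ω)
    (W : EuclideanSpace ℝ (Fin d) → ℝ) (hWsmooth : ContDiff ℝ (⊤ : ℕ∞) W)
    (hWbdd : ∃ C, ∀ x, |W x| ≤ C)
    (I₀ : ℝ) (hI₀ : 0 < I₀)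
    (Φ : ℝ → EuclideanSpace ℝ (Fin d) → ℝ)
    (hΦC2 : ∀ ε > (0:ℝ), ContDiffOn ℝ 2 (Φ ε) Ω)
    (hΦC1 : ∀ ε > (0:ℝ), ContDiffOn ℝ 1 (Φ ε) (closure Ω))
    (hPB : ∀ ε > (0:ℝ), ∀ x ∈ Ω,
      -ε * lap (Φ ε) x
        = I₀ * (exp (-(Φ ε x)) / (∫ y in Ω, exp (-(Φ ε y)))
            - exp (Φ ε x) / (∫ y in Ω, exp (Φ ε y))))
    (hbc : ∀ ε > (0:ℝ), ∀ x ∈ frontier Ω, Φ ε x = W x)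
    (ρ : ℝ → EuclideanSpace ℝ (Fin d) → ℝ)
    (hρ : ∀ ε x, ρ ε x
      = I₀ * (exp (-(Φ ε x)) / (∫ y in Ω, exp (-(Φ ε y)))
          - exp (Φ ε x) / (∫ y in Ω, exp (Φ ε y))))
    :
    Tendsto (fun ε => ∫ x in Ω, |ρ ε x| ^ 2) (𝓝[>] (0:ℝ)) (𝓝 0) := by
  classical
  have hd0 : 0 < d := by rcases hd with h | h <;> omega
  obtain ⟨C, hC⟩ := hWbdd
  have hC0 : 0 ≤ C := le_trans (abs_nonneg _) (hC 0)
  have hK : IsCompact (closure Ω) :=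
    Metric.isCompact_of_isClosed_isBounded isClosed_closure hΩbdd.closure
  have hfin : volume Ω < ⊤ := lt_of_le_of_lt (measure_mono subset_closure) hK.measure_lt_top
  have hvolpos : 0 < (volume Ω).toReal :=
    ENNReal.toReal_pos (hΩopen.measure_ne_zero volume hΩne) hfin.ne
  set vol := (volume Ω).toReal with hvol
  set C₁ : ℝ := I₀ * (exp C / (exp (-C) * vol)) with hC₁def
  set c₀ : ℝ := I₀ * (2 * (exp (-C) / (exp C * vol))) with hc₀def
  have hC₁pos : 0 < C₁ := mul_pos hI₀ (div_pos (exp_pos _) (mul_pos (exp_pos _) hvolpos))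
  have hc₀pos : 0 < c₀ := by
    apply mul_pos hI₀
    apply mul_pos two_pos (div_pos (exp_pos _) (mul_pos (exp_pos _) hvolpos))
  -- uniform supremum bound
  have key : ∀ ε, 0 < ε → ∀ x ∈ closure Ω, |Φ ε x| ≤ C := by
    intro ε hε
    have hmaxside := max_side hd0 hΩopen hΩne hΩbdd hε hI₀ (hΦC2 ε hε) (hΦC1 ε hε)
      (hPB ε hε) (hbc ε hε) hC
    have hPBneg : ∀ x ∈ Ω, -ε * lap (fun y => -(Φ ε y)) x
        = I₀ * (exp (-(-(Φ ε x))) / (∫ y in Ω, exp (-(-(Φ ε y))))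
            - exp (-(Φ ε x)) / (∫ y in Ω, exp (-(Φ ε y)))) := by
      intro x hx
      have h := hPB ε hε x hx
      rw [lap_neg]
      simp only [neg_neg]
      linarith
    have hminside := max_side (W := fun y => -(W y)) hd0 hΩopen hΩne hΩbdd hε hI₀
      (hΦC2 ε hε).neg (hΦC1 ε hε).neg hPBneg
      (fun x hx => by rw [hbc ε hε x hx])
      (fun x => by rw [abs_neg]; exact hC x)
    intro x hx
    rw [abs_le]
    constructor
    · have := hminside x hx
      linarith
    · exact hmaxside x hx
  -- pointwise bounds for each ε
  have main : ∀ ε, 0 < ε → (∀ y ∈ Ω, |ρ ε y| ≤ C₁) ∧ (∀ x ∈ Ω, ∀ s : ℝ, 0 < s →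
      {y : EuclideanSpace ℝ (Fin d) | ∀ j, |y j - x j| ≤ s} ⊆ Ω →
      |ρ ε x| ≤ ((d : ℝ) * C₁) / Real.cosh (Real.sqrt (c₀/ε) * s)) := by
    intro ε hε
    have habs := key ε hε
    have hucont : ContinuousOn (Φ ε) (closure Ω) := (hΦC1 ε hε).continuousOn
    have hintm : IntegrableOn (fun y => exp (-(Φ ε y))) Ω volume :=
      IntegrableOn.mono_set
        ((continuous_exp.comp_continuousOn hucont.neg).integrableOn_compact hK) subset_closure
    have hintp : IntegrableOn (fun y => exp (Φ ε y)) Ω volume :=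
      IntegrableOn.mono_set
        ((continuous_exp.comp_continuousOn hucont).integrableOn_compact hK) subset_closure
    obtain ⟨A, hA⟩ : ∃ A : ℝ, A = ∫ y in Ω, exp (-(Φ ε y)) := ⟨_, rfl⟩
    obtain ⟨B, hB⟩ : ∃ B : ℝ, B = ∫ y in Ω, exp (Φ ε y) := ⟨_, rfl⟩
    have hub : ∀ y ∈ Ω, Φ ε y ≤ C := fun y hy => (abs_le.1 (habs y (subset_closure hy))).2
    have hlb : ∀ y ∈ Ω, -C ≤ Φ ε y := fun y hy => (abs_le.1 (habs y (subset_closure hy))).1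
    have hAlb : exp (-C) * vol ≤ A := by
      rw [hA]
      exact setIntegral_ge_of_const_le_real hΩopen.measurableSet hfin.ne
        (fun y hy => exp_le_exp.2 (by linarith [hub y hy])) hintm
    have hAub : A ≤ exp C * vol := by
      rw [hA]
      calc (∫ y in Ω, exp (-(Φ ε y))) ≤ ∫ _y in Ω, exp C :=
            setIntegral_mono_on hintm (integrableOn_const hfin.ne)
              hΩopen.measurableSet (fun y hy => exp_le_exp.2 (by linarith [hlb y hy]))
        _ = exp C * vol := by rw [setIntegral_const, smul_eq_mul, mul_comm, measureReal_def]
    have hBlb : exp (-C) * vol ≤ B := by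
      rw [hB]
      exact setIntegral_ge_of_const_le_real hΩopen.measurableSet hfin.ne
        (fun y hy => exp_le_exp.2 (by linarith [hlb y hy])) hintp
    have hBub : B ≤ exp C * vol := by
      rw [hB]
      calc (∫ y in Ω, exp (Φ ε y)) ≤ ∫ _y in Ω, exp C :=
            setIntegral_mono_on hintp (integrableOn_const hfin.ne)
              hΩopen.measurableSet (fun y hy => exp_le_exp.2 (by linarith [hub y hy]))
        _ = exp C * vol := by rw [setIntegral_const, smul_eq_mul, mul_comm, measureReal_def]
    have hApos : 0 < A := lt_of_lt_of_le (mul_pos (exp_pos _) hvolpos) hAlb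
    have hBpos : 0 < B := lt_of_lt_of_le (mul_pos (exp_pos _) hvolpos) hBlb
    have hρε : ∀ y, ρ ε y = I₀ * (exp (-(Φ ε y))/A - exp (Φ ε y)/B) := by
      intro y; rw [hρ ε y, ← hA, ← hB]
    have hPB' : ∀ y ∈ Ω, -ε * lap (Φ ε) y = I₀ * (exp (-(Φ ε y))/A - exp (Φ ε y)/B) := by
      intro y hy
      have h := hPB ε hε y hy
      rw [← hA, ← hB] at h
      exact h
    -- uniform bound on ρ
    have hρbd' : ∀ y ∈ Ω, |I₀ * (exp (-(Φ ε y))/A - exp (Φ ε y)/B)| ≤ C₁ := by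
      intro y hy
      have e1 : exp (-(Φ ε y))/A ≤ exp C / (exp (-C) * vol) :=
        div_le_div₀ (exp_pos C).le (exp_le_exp.2 (by linarith [hlb y hy]))
          (mul_pos (exp_pos _) hvolpos) hAlb
      have e2 : exp (Φ ε y)/B ≤ exp C / (exp (-C) * vol) :=
        div_le_div₀ (exp_pos C).le (exp_le_exp.2 (by linarith [hub y hy]))
          (mul_pos (exp_pos _) hvolpos) hBlb
      have p1 : 0 ≤ exp (-(Φ ε y))/A := div_nonneg (exp_pos _).le hApos.le
      have p2 : 0 ≤ exp (Φ ε y)/B := div_nonneg (exp_pos _).le hBpos.le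
      rw [abs_mul, abs_of_pos hI₀, hC₁def]
      apply mul_le_mul_of_nonneg_left _ hI₀.le
      rw [abs_le]
      constructor
      · linarith
      · linarith
    -- lower bound on the coefficient
    have hc₀' : ∀ y ∈ Ω, c₀ ≤ I₀ * (exp (-(Φ ε y))/A + exp (Φ ε y)/B) := by
      intro y hy
      have e1 : exp (-C) / (exp C * vol) ≤ exp (-(Φ ε y))/A :=
        div_le_div₀ (exp_pos _).le (exp_le_exp.2 (by linarith [hub y hy])) hApos hAub
      have e2 : exp (-C) / (exp C * vol) ≤ exp (Φ ε y)/B :=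
        div_le_div₀ (exp_pos _).le (exp_le_exp.2 (by linarith [hlb y hy])) hBpos hBub
      rw [hc₀def]
      apply mul_le_mul_of_nonneg_left _ hI₀.le
      linarith
    constructor
    · intro y hy
      rw [hρε y]
      exact hρbd' y hy
    · intro x hx s hs hbox
      set κ := Real.sqrt (c₀/ε) with hκdef
      have hκpos : 0 < κ := Real.sqrt_pos.2 (div_pos hc₀pos hε)
      have hκsq : κ^2 * ε = c₀ := by
        rw [hκdef, Real.sq_sqrt (div_pos hc₀pos hε).le]
        field_simp
      have hplus := decay_side hΩopen hε hI₀ (hΦC2 ε hε) hPB' hρbd' hc₀' hc₀pos hκpos hκsq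
        hx hs hbox
      -- the negative side
      have hPBneg' : ∀ y ∈ Ω, -ε * lap (fun w => -(Φ ε w)) y
          = I₀ * (exp (-(-(Φ ε y)))/B - exp (-(Φ ε y))/A) := by
        intro y hy
        have h := hPB' y hy
        rw [lap_neg]
        simp only [neg_neg]
        linarith
      have hρbdneg : ∀ y ∈ Ω, |I₀ * (exp (-(-(Φ ε y)))/B - exp (-(Φ ε y))/A)| ≤ C₁ := by
        intro y hy
        have h := hρbd' y hy
        have heq : I₀ * (exp (-(-(Φ ε y)))/B - exp (-(Φ ε y))/A)
            = -(I₀ * (exp (-(Φ ε y))/A - exp (Φ ε y)/B)) := by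
          simp only [neg_neg]; ring
        rw [heq, abs_neg]
        exact h
      have hc₀neg : ∀ y ∈ Ω, c₀ ≤ I₀ * (exp (-(-(Φ ε y)))/B + exp (-(Φ ε y))/A) := by
        intro y hy
        have h := hc₀' y hy
        have heq : I₀ * (exp (-(-(Φ ε y)))/B + exp (-(Φ ε y))/A)
            = I₀ * (exp (-(Φ ε y))/A + exp (Φ ε y)/B) := by
          simp only [neg_neg]; ring
        rw [heq]
        exact h
      have hminus := decay_side (u := fun w => -(Φ ε w)) (a := B) (b := A) hΩopen hε hI₀
        (hΦC2 ε hε).neg hPBneg' hρbdneg hc₀neg hc₀pos hκpos hκsq hx hs hbox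
      have hminus' : -(ρ ε x) ≤ ((d : ℝ) * C₁) / Real.cosh (κ * s) := by
        have heq : -(ρ ε x) = I₀ * (exp (-(-(Φ ε x)))/B - exp (-(Φ ε x))/A) := by
          rw [hρε x]; simp only [neg_neg]; ring
        rw [heq]
        exact hminus
      rw [abs_le]
      constructor
      · linarith
      · rw [hρε x]
        exact hplus
  -- conclude by dominated convergence
  have hmeas : ∀ᶠ ε in 𝓝[>] (0:ℝ),
      AEStronglyMeasurable (fun x => |ρ ε x| ^ 2) (volume.restrict Ω) := by
    filter_upwards [self_mem_nhdsWithin] with ε hε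
    have hcont : ContinuousOn (ρ ε) Ω := by
      have : ρ ε = fun x => I₀ * (exp (-(Φ ε x)) / (∫ y in Ω, exp (-(Φ ε y)))
          - exp (Φ ε x) / (∫ y in Ω, exp (Φ ε y))) := funext (hρ ε)
      rw [this]
      have hucont : ContinuousOn (Φ ε) Ω := ((hΦC1 ε hε).continuousOn).mono subset_closure
      exact continuousOn_const.mul
        (((continuous_exp.comp_continuousOn hucont.neg).div_const _).sub
          ((continuous_exp.comp_continuousOn hucont).div_const _))
    exact ((hcont.abs.pow 2).aestronglyMeasurable hΩopen.measurableSet)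
  have hbound : ∀ᶠ ε in 𝓝[>] (0:ℝ),
      ∀ᵐ x ∂(volume.restrict Ω), ‖|ρ ε x| ^ 2‖ ≤ C₁^2 := by
    filter_upwards [self_mem_nhdsWithin] with ε hε
    rw [ae_restrict_iff' hΩopen.measurableSet]
    apply ae_of_all
    intro x hx
    rw [Real.norm_eq_abs, abs_of_nonneg (by positivity)]
    exact pow_le_pow_left₀ (abs_nonneg _) ((main ε hε).1 x hx) 2
  have hbint : Integrable (fun _ : EuclideanSpace ℝ (Fin d) => C₁^2) (volume.restrict Ω) :=
    integrableOn_const hfin.ne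
  have hΩcne : Ωᶜ.Nonempty := by
    haveI : Nonempty (Fin d) := ⟨⟨0, hd0⟩⟩
    haveI : Nontrivial (EuclideanSpace ℝ (Fin d)) := inferInstance
    by_contra h
    rw [Set.not_nonempty_iff_eq_empty, Set.compl_empty_iff] at h
    exact NormedSpace.unbounded_univ ℝ (EuclideanSpace ℝ (Fin d)) (h ▸ hΩbdd)
  have hlim : ∀ᵐ x ∂(volume.restrict Ω),
      Tendsto (fun ε => |ρ ε x| ^ 2) (𝓝[>] (0:ℝ)) (𝓝 0) := by
    rw [ae_restrict_iff' hΩopen.measurableSet]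
    apply ae_of_all
    intro x hx
    have hxc : x ∉ Ωᶜ := by simpa using hx
    have hrpos : 0 < Metric.infDist x Ωᶜ :=
      ((hΩopen.isClosed_compl).notMem_iff_infDist_pos hΩcne).1 hxc
    set r := Metric.infDist x Ωᶜ with hrdef
    have hsqrtd : 0 < Real.sqrt d := Real.sqrt_pos.2 (by exact_mod_cast hd0)
    set s := r / (2 * Real.sqrt d) with hsdef
    have hs : 0 < s := by positivity
    have hboxsub : {y : EuclideanSpace ℝ (Fin d) | ∀ j, |y j - x j| ≤ s} ⊆ Ω := by
      intro y hy
      have hrs : Real.sqrt d * s < r := by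
        rw [hsdef]
        rw [show Real.sqrt d * (r / (2 * Real.sqrt d)) = r / 2 by field_simp]
        linarith
      have h1 : y ∈ Metric.ball x r := box_subset_ball hs.le hrs hy
      by_contra hyΩ
      have h2 : r ≤ dist x y := Metric.infDist_le_dist_of_mem (by simpa using hyΩ)
      rw [Metric.mem_ball, dist_comm] at h1
      linarith
    apply squeeze_zero' (Eventually.of_forall fun ε => by positivity)
    · show ∀ᶠ ε in 𝓝[>] (0:ℝ), |ρ ε x| ^ 2
        ≤ ((d : ℝ) * C₁)^2 * ((Real.cosh (Real.sqrt (c₀/ε) * s))⁻¹)^2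
      filter_upwards [self_mem_nhdsWithin] with ε hε
      have hb := (main ε hε).2 x hx s hs hboxsub
      calc |ρ ε x| ^ 2 ≤ (((d : ℝ) * C₁) / Real.cosh (Real.sqrt (c₀/ε) * s))^2 :=
            pow_le_pow_left₀ (abs_nonneg _) hb 2
        _ = ((d : ℝ) * C₁)^2 * ((Real.cosh (Real.sqrt (c₀/ε) * s))⁻¹)^2 := by
            rw [div_pow, inv_pow, div_eq_mul_inv]
    · have t1 : Tendsto (fun ε : ℝ => c₀/ε) (𝓝[>] (0:ℝ)) atTop := by
        simpa [div_eq_mul_inv] using tendsto_inv_nhdsGT_zero.const_mul_atTop hc₀pos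
      have t2 : Tendsto (fun ε : ℝ => Real.sqrt (c₀/ε)) (𝓝[>] (0:ℝ)) atTop :=
        tendsto_sqrt_atTop'.comp t1
      have t3 : Tendsto (fun ε : ℝ => Real.sqrt (c₀/ε) * s) (𝓝[>] (0:ℝ)) atTop :=
        t2.atTop_mul_const hs
      have t4 : Tendsto (fun ε : ℝ => Real.cosh (Real.sqrt (c₀/ε) * s)) (𝓝[>] (0:ℝ)) atTop :=
        tendsto_cosh_atTop'.comp t3
      have t5 : Tendsto (fun ε : ℝ => (Real.cosh (Real.sqrt (c₀/ε) * s))⁻¹)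
          (𝓝[>] (0:ℝ)) (𝓝 0) := t4.inv_tendsto_atTop
      have t6 := (t5.pow 2).const_mul (((d : ℝ) * C₁)^2)
      simpa using t6
  have hDCT := tendsto_integral_filter_of_dominated_convergence (μ := volume.restrict Ω)
    (F := fun ε x => |ρ ε x| ^ 2) (f := fun _ => (0:ℝ)) (fun _ => C₁^2)
    hmeas hbound hbint hlim
  simpa using hDCT
end

section
/- Let ε > 0 and let Φ be twice continuously differentiable on the open set Ω ⊂ ℝ^d with e^{Φ} and e^{-Φ} integrable on Ω, and suppose -εΔΦ = ρ on Ω, where ρ = I₀ ( e^{-Φ}/∫_Ω e^{-Φ} dx − e^{Φ}/∫_Ω e^{Φ} dx ) with I₀ > 0. Then the function x ↦ ρ(x)² is subharmonic on Ω: Δ(ρ²)(x) ≥ 0 for every x ∈ Ω. -/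
open MeasureTheory Real Filter Set Topology

set_option maxHeartbeats 1000000

/-- Subharmonicity of `ρ²` for the blocking Poisson–Boltzmann charge density:
if `-εΔΦ = ρ` on `Ω` with
`ρ = I₀ (e^{-Φ}/∫_Ω e^{-Φ} − e^{Φ}/∫_Ω e^{Φ})`, then `Δ(ρ²) ≥ 0` on `Ω`. -/
theorem charge_density_squared_subharmonic_blocking
    {d : ℕ} (Ω : Set (EuclideanSpace ℝ (Fin d)))
    (hΩopen : IsOpen Ω) (hΩne : Ω.Nonempty) (hΩbdd : Bornology.IsBounded Ω)
    (ε I₀ : ℝ) (hε : 0 < ε) (hI₀ : 0 < I₀)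
    (Φ : EuclideanSpace ℝ (Fin d) → ℝ) (hΦC2 : ContDiffOn ℝ 2 Φ Ω)
    (hint₁ : IntegrableOn (fun x => exp (Φ x)) Ω)
    (hint₂ : IntegrableOn (fun x => exp (-(Φ x))) Ω)
    (ρ : EuclideanSpace ℝ (Fin d) → ℝ)
    (hρ : ∀ x, ρ x = I₀ * (exp (-(Φ x)) / (∫ y in Ω, exp (-(Φ y)))
        - exp (Φ x) / (∫ y in Ω, exp (Φ y))))
    (hPB : ∀ x ∈ Ω, -ε * lap Φ x = ρ x) :
    ∀ x ∈ Ω, 0 ≤ lap (fun y => ρ y ^ 2) x := by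
  intro x hx
  set A : ℝ := ∫ y in Ω, exp (-(Φ y)) with hAdef
  set B : ℝ := ∫ y in Ω, exp (Φ y) with hBdef
  have hμ : 0 < volume Ω := hΩopen.measure_pos volume hΩne
  have hApos : 0 < A := by
    rw [hAdef, setIntegral_pos_iff_support_of_nonneg_ae
      (Filter.Eventually.of_forall fun y => (exp_pos _).le) hint₂]
    have : Function.support (fun y : EuclideanSpace ℝ (Fin d) => exp (-(Φ y))) = Set.univ := by
      ext y; simp [Function.support, (exp_pos _).ne']
    rw [this, Set.univ_inter]; exact hμ
  have hBpos : 0 < B := by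
    rw [hBdef, setIntegral_pos_iff_support_of_nonneg_ae
      (Filter.Eventually.of_forall fun y => (exp_pos _).le) hint₁]
    have : Function.support (fun y : EuclideanSpace ℝ (Fin d) => exp (Φ y)) = Set.univ := by
      ext y; simp [Function.support, (exp_pos _).ne']
    rw [this, Set.univ_inter]; exact hμ
  set S : EuclideanSpace ℝ (Fin d) → ℝ :=
    fun y => I₀ * (exp (-(Φ y)) / A + exp (Φ y) / B) with hSdef
  have hSpos : ∀ y, 0 < S y := fun y => by
    have h1 : 0 < exp (-(Φ y)) / A := div_pos (exp_pos _) hApos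
    have h2 : 0 < exp (Φ y) / B := div_pos (exp_pos _) hBpos
    positivity
  have hΦAt : ∀ y ∈ Ω, ContDiffAt ℝ 2 Φ y := fun y hy =>
    hΦC2.contDiffAt (hΩopen.mem_nhds hy)
  have hΦd : ∀ y ∈ Ω, DifferentiableAt ℝ Φ y := fun y hy =>
    (hΦAt y hy).differentiableAt (by norm_num)
  -- derivative of ρ
  have hρ' : ∀ y ∈ Ω, HasFDerivAt ρ ((-S y) • fderiv ℝ Φ y) y := by
    intro y hy
    have hΦy : HasFDerivAt Φ (fderiv ℝ Φ y) y := (hΦd y hy).hasFDerivAt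
    have h1 : HasFDerivAt (fun z => exp (-(Φ z)))
        (exp (-(Φ y)) • -(fderiv ℝ Φ y)) y := hΦy.neg.exp
    have h2 : HasFDerivAt (fun z => exp (Φ z)) (exp (Φ y) • fderiv ℝ Φ y) y := hΦy.exp
    have h3 := (((h1.mul_const A⁻¹).sub (h2.mul_const B⁻¹)).const_mul I₀)
    have hfun : ρ = fun z => I₀ * (exp (-(Φ z)) * A⁻¹ - exp (Φ z) * B⁻¹) := by
      funext z; rw [hρ z]; rw [div_eq_mul_inv, div_eq_mul_inv]
    rw [hfun]
    have e : I₀ • (A⁻¹ • (exp (-(Φ y)) • -(fderiv ℝ Φ y)) - B⁻¹ • (exp (Φ y) • fderiv ℝ Φ y))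
        = (-S y) • fderiv ℝ Φ y := by
      refine ContinuousLinearMap.ext fun w => ?_
      simp only [ContinuousLinearMap.smul_apply, ContinuousLinearMap.sub_apply,
        ContinuousLinearMap.neg_apply, smul_eq_mul, hSdef]
      field_simp
      ring
    rw [← e]; exact h3
  -- derivative of S
  have hS' : ∀ y ∈ Ω, HasFDerivAt S ((-ρ y) • fderiv ℝ Φ y) y := by
    intro y hy
    have hΦy : HasFDerivAt Φ (fderiv ℝ Φ y) y := (hΦd y hy).hasFDerivAt
    have h1 : HasFDerivAt (fun z => exp (-(Φ z)))
        (exp (-(Φ y)) • -(fderiv ℝ Φ y)) y := hΦy.neg.exp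
    have h2 : HasFDerivAt (fun z => exp (Φ z)) (exp (Φ y) • fderiv ℝ Φ y) y := hΦy.exp
    have h3 := (((h1.mul_const A⁻¹).add (h2.mul_const B⁻¹)).const_mul I₀)
    have hfun : S = fun z => I₀ * (exp (-(Φ z)) * A⁻¹ + exp (Φ z) * B⁻¹) := by
      funext z; simp only [hSdef, div_eq_mul_inv]
    rw [hfun]
    have e : I₀ • (A⁻¹ • (exp (-(Φ y)) • -(fderiv ℝ Φ y)) + B⁻¹ • (exp (Φ y) • fderiv ℝ Φ y))
        = (-ρ y) • fderiv ℝ Φ y := by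
      refine ContinuousLinearMap.ext fun w => ?_
      simp only [ContinuousLinearMap.smul_apply, ContinuousLinearMap.add_apply,
        ContinuousLinearMap.neg_apply, smul_eq_mul, hρ y]
      field_simp
      ring
    rw [← e]; exact h3
  -- derivative of ρ²
  have hρ2' : ∀ y ∈ Ω, HasFDerivAt (fun z => ρ z ^ 2)
      ((2 * ρ y * -S y) • fderiv ℝ Φ y) y := by
    intro y hy
    have h := (hρ' y hy).mul (hρ' y hy)
    have hfun : (fun z => ρ z ^ 2) = fun z => ρ z * ρ z := by funext z; ring
    rw [hfun]
    have e : ρ y • ((-S y) • fderiv ℝ Φ y) + ρ y • ((-S y) • fderiv ℝ Φ y)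
        = (2 * ρ y * -S y) • fderiv ℝ Φ y := by
      refine ContinuousLinearMap.ext fun w => ?_
      simp only [ContinuousLinearMap.smul_apply, ContinuousLinearMap.add_apply, smul_eq_mul]
      ring
    rw [← e]; exact h
  -- per-direction second derivative computation
  have key : ∀ i : Fin d,
      fderiv ℝ (fun y => fderiv ℝ (fun z => ρ z ^ 2) y (EuclideanSpace.single i 1)) x
          (EuclideanSpace.single i 1)
        = 2 * (ρ x ^ 2 + S x ^ 2) * (fderiv ℝ Φ x (EuclideanSpace.single i 1)) ^ 2
          - 2 * ρ x * S x *
            (fderiv ℝ (fun y => fderiv ℝ Φ y (EuclideanSpace.single i 1)) x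
              (EuclideanSpace.single i 1)) := by
    intro i
    set v : EuclideanSpace ℝ (Fin d) := EuclideanSpace.single i 1 with hvdef
    set D : EuclideanSpace ℝ (Fin d) → ℝ := fun y => fderiv ℝ Φ y v with hDdef
    have hDdiff : DifferentiableAt ℝ D x := by
      have h2 : ContDiffAt ℝ 1 (fderiv ℝ Φ) x := by
        refine (hΦAt x hx).fderiv_right ?_
        norm_num
      have h3 : DifferentiableAt ℝ (fderiv ℝ Φ) x := h2.differentiableAt (by norm_num)
      exact (ContinuousLinearMap.apply ℝ ℝ v).differentiableAt.comp x h3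
    have hDx : HasFDerivAt D (fderiv ℝ D x) x := hDdiff.hasFDerivAt
    -- the coefficient function and its derivative
    have hc : HasFDerivAt (fun y => 2 * ρ y * -S y)
        ((2 * (ρ x ^ 2 + S x ^ 2)) • fderiv ℝ Φ x) x := by
      have h := ((hρ' x hx).mul (hS' x hx)).const_mul (-2 : ℝ)
      have hfun : (fun y => 2 * ρ y * -S y) = fun y => (-2 : ℝ) * (ρ y * S y) := by
        funext y; ring
      rw [hfun]
      have e : (-2 : ℝ) • (ρ x • ((-ρ x) • fderiv ℝ Φ x) + S x • ((-S x) • fderiv ℝ Φ x))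
          = (2 * (ρ x ^ 2 + S x ^ 2)) • fderiv ℝ Φ x := by
        refine ContinuousLinearMap.ext fun w => ?_
        simp only [ContinuousLinearMap.smul_apply, ContinuousLinearMap.add_apply, smul_eq_mul]
        ring
      rw [← e]; exact h
    have hprod : HasFDerivAt (fun y => (2 * ρ y * -S y) * D y)
        ((2 * ρ x * -S x) • fderiv ℝ D x
          + D x • ((2 * (ρ x ^ 2 + S x ^ 2)) • fderiv ℝ Φ x)) x := hc.mul hDx
    have heq : (fun y => fderiv ℝ (fun z => ρ z ^ 2) y v)
        =ᶠ[nhds x] (fun y => (2 * ρ y * -S y) * D y) := by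
      filter_upwards [hΩopen.mem_nhds hx] with y hy
      rw [(hρ2' y hy).fderiv]
      simp [hDdef]
    rw [heq.fderiv_eq, hprod.fderiv]
    simp only [ContinuousLinearMap.add_apply, ContinuousLinearMap.smul_apply, smul_eq_mul,
      hDdef]
    ring
  -- assemble
  have hlap : lap (fun y => ρ y ^ 2) x
      = 2 * (ρ x ^ 2 + S x ^ 2) *
          (∑ i : Fin d, (fderiv ℝ Φ x (EuclideanSpace.single i 1)) ^ 2)
        - 2 * ρ x * S x * lap Φ x := by
    have h1 : lap (fun y => ρ y ^ 2) x
        = ∑ i : Fin d,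
            (2 * (ρ x ^ 2 + S x ^ 2) * (fderiv ℝ Φ x (EuclideanSpace.single i 1)) ^ 2
              - 2 * ρ x * S x *
                (fderiv ℝ (fun y => fderiv ℝ Φ y (EuclideanSpace.single i 1)) x
                  (EuclideanSpace.single i 1))) :=
      Finset.sum_congr rfl fun i _ => key i
    rw [h1, Finset.sum_sub_distrib, ← Finset.mul_sum, ← Finset.mul_sum]
    rfl
  have hlapΦ : lap Φ x = -(ρ x) / ε := by
    have := hPB x hx
    field_simp
    linarith
  rw [hlap, hlapΦ]
  have hsum : 0 ≤ ∑ i : Fin d, (fderiv ℝ Φ x (EuclideanSpace.single i 1)) ^ 2 :=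
    Finset.sum_nonneg fun i _ => sq_nonneg _
  have h1 : 0 ≤ 2 * (ρ x ^ 2 + S x ^ 2) *
      (∑ i : Fin d, (fderiv ℝ Φ x (EuclideanSpace.single i 1)) ^ 2) := by positivity
  have h2 : 0 ≤ ρ x ^ 2 * S x / ε := by
    have := (hSpos x).le
    positivity
  have h3 : 0 ≤ -(2 * ρ x * S x * (-(ρ x) / ε)) := by
    have e : -(2 * ρ x * S x * (-(ρ x) / ε)) = 2 * (ρ x ^ 2 * S x) / ε := by
      field_simp
    rw [e]
    have := (hSpos x).le
    positivity
  linarith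
end

section
/- Maximum principle (upper bound): for every x in the closure of Ω, e^{φ(x)} ≤ max{ ( (1/(I₂ Z₁)) ∫_Ω e^{φ} dx )^{1/2}, e^{sup_{∂Ω} W} }. -/
open MeasureTheory Real Filter Set Topology

lemma aux_second_deriv_nonpos_of_localmax {g h : ℝ → ℝ} {c : ℝ} {U : Set ℝ}
    (hU : IsOpen U) (h0U : (0:ℝ) ∈ U)
    (hg : ∀ t ∈ U, HasDerivAt g (h t) t) (hh : HasDerivAt h c 0)
    (hmax : IsLocalMax g 0) : c ≤ 0 := by
  by_contra hc
  push_neg at hc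
  have hh0 : h 0 = 0 := hmax.hasDerivAt_eq_zero (hg 0 h0U)
  have hslope : Tendsto (slope h 0) (𝓝[≠] 0) (𝓝 c) :=
    hasDerivAt_iff_tendsto_slope.mp hh
  have hev : ∀ᶠ t in 𝓝[≠] (0:ℝ), 0 < slope h 0 t :=
    hslope.eventually (eventually_gt_nhds hc)
  have hev' : ∀ᶠ t in 𝓝[>] (0:ℝ), 0 < h t := by
    have := hev.filter_mono (nhdsWithin_mono 0 (by intro x hx; exact ne_of_gt hx))
    filter_upwards [this, self_mem_nhdsWithin] with t ht ht0
    have h2 : 0 < t⁻¹ * (h t - h 0) := by simpa [slope] using ht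
    rw [hh0, sub_zero] at h2
    have ht0' : (0:ℝ) < t := ht0
    have := mul_pos ht0' h2; rw [mul_inv_cancel_left₀ (ne_of_gt ht0')] at this; exact this
  obtain ⟨δ₂, hδ₂, hIoo⟩ := (mem_nhdsGT_iff_exists_Ioo_subset).mp hev'
  have hUev : ∀ᶠ t in 𝓝 (0:ℝ), t ∈ U ∧ g t ≤ g 0 := (hU.eventually_mem h0U).and hmax
  obtain ⟨δ₁, hδ₁, hball⟩ := Metric.eventually_nhds_iff.mp hUev
  have hδ₂' : (0:ℝ) < δ₂ := hδ₂
  set b := min δ₁ δ₂ / 2 with hb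
  have hbpos : 0 < b := by positivity
  have hbδ₁ : b < δ₁ := by
    have : min δ₁ δ₂ ≤ δ₁ := min_le_left _ _
    simp only [hb]; linarith
  have hbδ₂ : b < δ₂ := by
    have : min δ₁ δ₂ ≤ δ₂ := min_le_right _ _
    simp only [hb]; linarith
  have hIccU : Icc (0:ℝ) b ⊆ U := by
    intro t ht
    exact (hball (by rw [Real.dist_eq, sub_zero, abs_of_nonneg ht.1]; linarith [ht.2])).1
  have hmono : StrictMonoOn g (Icc (0:ℝ) b) := by
    apply strictMonoOn_of_deriv_pos (convex_Icc _ _)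
    · exact fun t ht => ((hg t (hIccU ht)).continuousAt).continuousWithinAt
    · intro t ht
      rw [interior_Icc] at ht
      rw [(hg t (hIccU ⟨ht.1.le, ht.2.le⟩)).deriv]
      exact hIoo ⟨ht.1, lt_trans ht.2 hbδ₂⟩
  have : g 0 < g b := hmono (by constructor <;> simp [hbpos.le]) (by simp [hbpos.le]) hbpos
  have hgb : g b ≤ g 0 :=
    (hball (by rw [Real.dist_eq, sub_zero, abs_of_nonneg hbpos.le]; exact hbδ₁)).2
  linarith

lemma aux_dir_second_deriv_nonpos {d : ℕ} {Ω : Set (EuclideanSpace ℝ (Fin d))}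
    (hΩopen : IsOpen Ω) {φ : EuclideanSpace ℝ (Fin d) → ℝ}
    (hφC2 : ContDiffOn ℝ 2 φ Ω) {x₀ : EuclideanSpace ℝ (Fin d)} (hx₀ : x₀ ∈ Ω)
    (hmax : ∀ y ∈ Ω, φ y ≤ φ x₀) (v : EuclideanSpace ℝ (Fin d)) :
    fderiv ℝ (fun y => fderiv ℝ φ y v) x₀ v ≤ 0 := by
  set L : ℝ → EuclideanSpace ℝ (Fin d) := fun t => x₀ + t • v with hLdef
  have hL : ∀ t, HasDerivAt L v t := by
    intro t
    simpa [hLdef] using ((hasDerivAt_id t).smul_const v).const_add x₀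
  have hL0 : L 0 = x₀ := by simp [hLdef]
  have hLc : Continuous L := by continuity
  set U : Set ℝ := L ⁻¹' Ω with hUdef
  have hUopen : IsOpen U := hΩopen.preimage hLc
  have h0U : (0:ℝ) ∈ U := by simp [hUdef, hL0, hx₀]
  set h : ℝ → ℝ := fun t => fderiv ℝ φ (L t) v with hhdef
  have hg : ∀ t ∈ U, HasDerivAt (fun t => φ (L t)) (h t) t := by
    intro t ht
    have hdφ : DifferentiableAt ℝ φ (L t) :=
      (hφC2.contDiffAt (hΩopen.mem_nhds ht)).differentiableAt (by norm_num)
    exact hdφ.hasFDerivAt.comp_hasDerivAt t (hL t)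
  have hfd : ContDiffAt ℝ 1 (fderiv ℝ φ) x₀ :=
    (hφC2.contDiffAt (hΩopen.mem_nhds hx₀)).fderiv_right (le_refl _)
  set G := fderiv ℝ (fderiv ℝ φ) x₀ with hGdef
  have hG : HasFDerivAt (fderiv ℝ φ) G x₀ :=
    (hfd.differentiableAt (by norm_num)).hasFDerivAt
  set A := ContinuousLinearMap.apply ℝ ℝ v with hAdef
  have hF : HasFDerivAt (fun y => fderiv ℝ φ y v) (A.comp G) x₀ :=
    A.hasFDerivAt.comp x₀ hG
  have hh : HasDerivAt h ((A.comp G) v) 0 := by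
    have hF' : HasFDerivAt (fun y => fderiv ℝ φ y v) (A.comp G) (L 0) := hL0 ▸ hF
    exact hF'.comp_hasDerivAt 0 (hL 0)
  have hlm : IsLocalMax (fun t => φ (L t)) 0 := by
    filter_upwards [hUopen.mem_nhds h0U] with t ht
    simpa [hL0] using hmax (L t) ht
  have hc : (A.comp G) v ≤ 0 :=
    aux_second_deriv_nonpos_of_localmax hUopen h0U hg hh hlm
  rw [hF.fderiv]
  exact hc

/-- Maximum principle (upper bound): for every `x` in the closure of `Ω`,
`e^{φ(x)} ≤ max{ ((1/(I₂Z₁)) ∫_Ω e^{φ})^{1/2}, e^{sup_{∂Ω} W} }`. -/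
theorem max_principle_upper_bound_selective_blocking
    {d : ℕ} (hd : d = 2 ∨ d = 3)
    (Ω : Set (EuclideanSpace ℝ (Fin d)))
    (hΩopen : IsOpen Ω) (hΩne : Ω.Nonempty) (hΩbdd : Bornology.IsBounded Ω)
    (W : EuclideanSpace ℝ (Fin d) → ℝ) (hWcont : Continuous W)
    (hWbdd : ∃ C, ∀ x, |W x| ≤ C)
    (Z₁ I₂ ε : ℝ) (hZ₁ : 0 < Z₁) (hI₂ : 0 < I₂) (hε : 0 < ε)
    (φ : EuclideanSpace ℝ (Fin d) → ℝ)
    (hφcont : ContinuousOn φ (closure Ω))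
    (hφC2 : ContDiffOn ℝ 2 φ Ω)
    (hPB : ∀ x ∈ Ω,
      -ε * lap φ x = exp (-(φ x)) / Z₁ - I₂ * exp (φ x) / (∫ y in Ω, exp (φ y)))
    (hbc : ∀ x ∈ frontier Ω, φ x = W x) :
    ∀ x ∈ closure Ω,
      exp (φ x) ≤ max (Real.sqrt (1 / (I₂ * Z₁) * ∫ y in Ω, exp (φ y)))
          (exp (sSup (W '' frontier Ω))) := by
  have hK : IsCompact (closure Ω) := hΩbdd.isCompact_closure
  have hne : (closure Ω).Nonempty := hΩne.closure
  obtain ⟨x₀, hx₀K, hmax⟩ := hK.exists_isMaxOn hne hφcont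
  have hmax' : ∀ y ∈ closure Ω, φ y ≤ φ x₀ := hmax
  intro x hx
  have hxle : exp (φ x) ≤ exp (φ x₀) := exp_le_exp.mpr (hmax' x hx)
  refine le_trans hxle ?_
  by_cases hx₀Ω : x₀ ∈ Ω
  · -- interior maximum: use the PDE and lap ≤ 0
    have hce : ContinuousOn (fun y => exp (φ y)) (closure Ω) :=
      Real.continuous_exp.comp_continuousOn hφcont
    have hInt : IntegrableOn (fun y => exp (φ y)) Ω :=
      (hce.integrableOn_compact hK).mono_set subset_closure
    have hJ : 0 < ∫ y in Ω, exp (φ y) := by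
      rw [setIntegral_pos_iff_support_of_nonneg_ae
        (Filter.Eventually.of_forall fun y => (exp_pos _).le) hInt]
      have : Function.support (fun y => exp (φ y)) = univ := by
        ext y; simp [Function.support, (exp_pos _).ne']
      rw [this, univ_inter]
      exact hΩopen.measure_pos volume hΩne
    have hmaxΩ : ∀ y ∈ Ω, φ y ≤ φ x₀ := fun y hy => hmax' y (subset_closure hy)
    have hlap : lap φ x₀ ≤ 0 := by
      apply Finset.sum_nonpos
      intro i _
      exact aux_dir_second_deriv_nonpos hΩopen hφC2 hx₀Ω hmaxΩ _
    have hPB0 := hPB x₀ hx₀Ω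
    have hlhs : 0 ≤ -ε * lap φ x₀ := by nlinarith
    rw [hPB0] at hlhs
    rw [Real.exp_neg] at hlhs
    set E := exp (φ x₀) with hE
    set J := ∫ y in Ω, exp (φ y) with hJdef
    have hEpos : 0 < E := exp_pos _
    refine le_max_of_le_left ?_
    rw [show E = Real.sqrt (E^2) by rw [Real.sqrt_sq hEpos.le]]
    apply Real.sqrt_le_sqrt
    have h' : I₂ * E / J ≤ E⁻¹ / Z₁ := by linarith
    rw [div_le_div_iff₀ hJ hZ₁] at h'
    have hinv : E * E⁻¹ = 1 := mul_inv_cancel₀ hEpos.ne'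
    have key : E ^ 2 * (I₂ * Z₁) ≤ J := by nlinarith
    have hIZ : 0 < I₂ * Z₁ := mul_pos hI₂ hZ₁
    rw [← le_div_iff₀ hIZ] at key
    calc E ^ 2 ≤ J / (I₂ * Z₁) := key
      _ = 1 / (I₂ * Z₁) * J := by ring
  · -- boundary maximum
    have hfr : x₀ ∈ frontier Ω := by
      rw [frontier, hΩopen.interior_eq]
      exact ⟨hx₀K, hx₀Ω⟩
    refine le_max_of_le_right ?_
    rw [hbc x₀ hfr, exp_le_exp]
    obtain ⟨C, hC⟩ := hWbdd
    apply le_csSup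
    · exact ⟨C, by rintro _ ⟨y, -, rfl⟩; exact (abs_le.mp (hC y)).2⟩
    · exact mem_image_of_mem W hfr
end

section
/- Minimum principle (lower bound): for every x in the closure of Ω, e^{-φ(x)} ≤ max{ ( (I₂ Z₁/|Ω|²) ∫_Ω e^{-φ} dx )^{1/2}, e^{-inf_{∂Ω} W} }. -/
open MeasureTheory Real Filter Set Topology

/-- One-dimensional fact: if `g` has derivative `g'` on `(-δ, δ)`, `g'` has derivative `L` at `0`,
and `g` has a minimum at `0` on `(-δ, δ)`, then `L ≥ 0`. -/
lemma second_deriv_nonneg_of_min {g g' : ℝ → ℝ} {δ L : ℝ} (hδ : 0 < δ)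
    (hdiff : ∀ t ∈ Set.Ioo (-δ) δ, HasDerivAt g (g' t) t)
    (hder2 : HasDerivAt g' L 0)
    (hmin : ∀ t ∈ Set.Ioo (-δ) δ, g 0 ≤ g t) : 0 ≤ L := by
  by_contra hcon
  push_neg at hcon
  have h0mem : (0:ℝ) ∈ Set.Ioo (-δ) δ := ⟨by linarith, hδ⟩
  have hnbhd : Set.Ioo (-δ) δ ∈ 𝓝 (0:ℝ) := isOpen_Ioo.mem_nhds h0mem
  have hloc : IsLocalMin g 0 := by
    filter_upwards [hnbhd] with t ht using hmin t ht
  have hg'0 : g' 0 = 0 := hloc.hasDerivAt_eq_zero (hdiff 0 h0mem)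
  -- slope of g' tends to L < 0
  have hslope : Tendsto (fun t => g' t / t) (𝓝[≠] (0:ℝ)) (𝓝 L) := by
    have h := hasDerivAt_iff_tendsto_slope.mp hder2
    have : (slope g' 0) = fun t => g' t / t := by
      funext t
      simp [slope_def_field, hg'0]
    rwa [this] at h
  have hev : ∀ᶠ t in 𝓝[≠] (0:ℝ), g' t / t < 0 :=
    hslope.eventually (Filter.Tendsto.eventually_lt_const hcon tendsto_id)
  have hev' : ∀ᶠ t in 𝓝[>] (0:ℝ), g' t / t < 0 :=
    hev.filter_mono (nhdsWithin_mono _ (fun x hx => ne_of_gt hx))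
  obtain ⟨η, hη, hηneg⟩ : ∃ η > 0, ∀ t ∈ Set.Ioo (0:ℝ) η, g' t / t < 0 := by
    rcases (mem_nhdsGT_iff_exists_Ioo_subset).mp hev' with ⟨u, hu, hsub⟩
    exact ⟨u, hu, fun t ht => hsub ht⟩
  set c := min (η / 2) (δ / 2) with hc
  have hcpos : 0 < c := by positivity
  have hcη : c < η := lt_of_le_of_lt (min_le_left _ _) (by linarith)
  have hcδ : c < δ := lt_of_le_of_lt (min_le_right _ _) (by linarith)
  have hIccsub : Set.Icc (0:ℝ) c ⊆ Set.Ioo (-δ) δ := by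
    intro t ht
    exact ⟨by linarith [ht.1], by linarith [ht.2]⟩
  have hanti : StrictAntiOn g (Set.Icc (0:ℝ) c) := by
    apply strictAntiOn_of_deriv_neg (convex_Icc 0 c)
    · intro t ht
      exact ((hdiff t (hIccsub ht)).continuousAt).continuousWithinAt
    · intro t ht
      rw [interior_Icc] at ht
      rw [(hdiff t (hIccsub ⟨ht.1.le, ht.2.le⟩)).deriv]
      have hneg := hηneg t ⟨ht.1, lt_trans ht.2 hcη⟩
      rcases div_neg_iff.mp hneg with ⟨h1, h2⟩ | ⟨h1, h2⟩
      · linarith [ht.1]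
      · exact h1
  have hlt : g c < g 0 := hanti (Set.left_mem_Icc.mpr hcpos.le) (Set.right_mem_Icc.mpr hcpos.le) hcpos
  have hge : g 0 ≤ g c := hmin c ⟨by linarith, hcδ⟩
  linarith

/-- At an interior minimum of a `C²` function, the Laplacian is nonnegative. -/
lemma lap_nonneg_at_min {d : ℕ} {Ω : Set (EuclideanSpace ℝ (Fin d))} (hΩopen : IsOpen Ω)
    {φ : EuclideanSpace ℝ (Fin d) → ℝ} (hφC2 : ContDiffOn ℝ 2 φ Ω)
    {x₀ : EuclideanSpace ℝ (Fin d)} (hx₀ : x₀ ∈ Ω)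
    (hmin : ∀ x ∈ Ω, φ x₀ ≤ φ x) : 0 ≤ lap φ x₀ := by
  obtain ⟨r, hr, hball⟩ := Metric.isOpen_iff.mp hΩopen x₀ hx₀
  unfold lap
  apply Finset.sum_nonneg
  intro i _
  set v : EuclideanSpace ℝ (Fin d) := EuclideanSpace.single i (1:ℝ) with hv
  have hvnorm : ‖v‖ = 1 := by simp [hv, EuclideanSpace.norm_single]
  have hline : ∀ t ∈ Set.Ioo (-r) r, x₀ + t • v ∈ Ω := by
    intro t ht
    apply hball
    have : dist (x₀ + t • v) x₀ = |t| := by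
      rw [dist_eq_norm]
      simp [norm_smul, hvnorm]
    rw [Metric.mem_ball, this]
    exact abs_lt.mpr ⟨ht.1, ht.2⟩
  have hφdiffAt : ∀ y ∈ Ω, HasFDerivAt φ (fderiv ℝ φ y) y := by
    intro y hy
    exact (((hφC2.contDiffAt (hΩopen.mem_nhds hy)).differentiableAt (by norm_num))).hasFDerivAt
  have hLder : ∀ t : ℝ, HasDerivAt (fun s : ℝ => x₀ + s • v) v t := by
    intro t
    have h1 : HasDerivAt (fun s : ℝ => s • v) ((1:ℝ) • v) t := (hasDerivAt_id t).smul_const v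
    simpa using h1.const_add x₀
  set g : ℝ → ℝ := fun t => φ (x₀ + t • v) with hg
  set g' : ℝ → ℝ := fun t => fderiv ℝ φ (x₀ + t • v) v with hg'
  have hdiff : ∀ t ∈ Set.Ioo (-r) r, HasDerivAt g (g' t) t := by
    intro t ht
    exact (hφdiffAt _ (hline t ht)).comp_hasDerivAt t (hLder t)
  set H : EuclideanSpace ℝ (Fin d) → ℝ := fun y => fderiv ℝ φ y v with hH
  have hF : DifferentiableAt ℝ (fderiv ℝ φ) x₀ := by
    have h2 : ContDiffAt ℝ 2 φ x₀ := hφC2.contDiffAt (hΩopen.mem_nhds hx₀)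
    exact (h2.fderiv_right (m := 1) (by norm_num)).differentiableAt one_ne_zero
  have hHdiff : DifferentiableAt ℝ H x₀ := hF.clm_apply (differentiableAt_const v)
  have hg'der : HasDerivAt g' (fderiv ℝ H x₀ v) 0 := by
    have h0 : x₀ + (0:ℝ) • v = x₀ := by simp
    have hHfd : HasFDerivAt H (fderiv ℝ H x₀) ((fun s : ℝ => x₀ + s • v) 0) := by
      rw [show (fun s : ℝ => x₀ + s • v) 0 = x₀ by simp]
      exact hHdiff.hasFDerivAt
    exact hHfd.comp_hasDerivAt 0 (hLder 0)
  have hgmin : ∀ t ∈ Set.Ioo (-r) r, g 0 ≤ g t := by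
    intro t ht
    have : g 0 = φ x₀ := by simp [hg]
    rw [this]
    exact hmin _ (hline t ht)
  exact second_deriv_nonneg_of_min hr hdiff hg'der hgmin

/-- Minimum principle (lower bound): for every `x` in the closure of `Ω`,
`e^{-φ(x)} ≤ max{ ((I₂Z₁/|Ω|²) ∫_Ω e^{-φ})^{1/2}, e^{-inf_{∂Ω} W} }`. -/
theorem min_principle_lower_bound_selective_blocking
    {d : ℕ} (hd : d = 2 ∨ d = 3)
    (Ω : Set (EuclideanSpace ℝ (Fin d)))
    (hΩopen : IsOpen Ω) (hΩne : Ω.Nonempty) (hΩbdd : Bornology.IsBounded Ω)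
    (W : EuclideanSpace ℝ (Fin d) → ℝ) (hWcont : Continuous W)
    (hWbdd : ∃ C, ∀ x, |W x| ≤ C)
    (Z₁ I₂ ε : ℝ) (hZ₁ : 0 < Z₁) (hI₂ : 0 < I₂) (hε : 0 < ε)
    (φ : EuclideanSpace ℝ (Fin d) → ℝ)
    (hφcont : ContinuousOn φ (closure Ω))
    (hφC2 : ContDiffOn ℝ 2 φ Ω)
    (hPB : ∀ x ∈ Ω,
      -ε * lap φ x = exp (-(φ x)) / Z₁ - I₂ * exp (φ x) / (∫ y in Ω, exp (φ y)))
    (hbc : ∀ x ∈ frontier Ω, φ x = W x) :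
    ∀ x ∈ closure Ω,
      exp (-(φ x))
        ≤ max (Real.sqrt (I₂ * Z₁ / (volume Ω).toReal ^ 2 * ∫ y in Ω, exp (-(φ y))))
            (exp (-sInf (W '' frontier Ω))) := by
  intro x hx
  have hcpt : IsCompact (closure Ω) := hΩbdd.isCompact_closure
  have hclne : (closure Ω).Nonempty := hΩne.closure
  obtain ⟨x₀, hx₀cl, hx₀min⟩ := hcpt.exists_isMinOn hclne hφcont
  have hmono : exp (-(φ x)) ≤ exp (-(φ x₀)) := by
    have := hx₀min hx
    exact exp_le_exp.mpr (by simp only [neg_le_neg_iff]; exact this)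
  refine le_trans hmono ?_
  have hcases : x₀ ∈ Ω ∨ x₀ ∈ frontier Ω := by
    by_cases h : x₀ ∈ Ω
    · exact Or.inl h
    · right
      rw [frontier, hΩopen.interior_eq]
      exact ⟨hx₀cl, h⟩
  rcases hcases with hx₀Ω | hfr
  · -- interior case
    refine le_max_of_le_left ?_
    set V := (volume Ω).toReal with hV
    set J := ∫ y in Ω, exp (φ y) with hJ
    set K := ∫ y in Ω, exp (-(φ y)) with hK
    have hfin : volume Ω < ⊤ :=
      lt_of_le_of_lt (measure_mono subset_closure) hcpt.measure_lt_top
    have hVpos : 0 < V :=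
      ENNReal.toReal_pos (hΩopen.measure_pos volume hΩne).ne' hfin.ne
    have hInt1 : IntegrableOn (fun y => exp (φ y)) Ω volume :=
      ((continuous_exp.comp_continuousOn hφcont).integrableOn_compact hcpt).mono_set
        subset_closure
    have hInt2 : IntegrableOn (fun y => exp (-(φ y))) Ω volume :=
      ((continuous_exp.comp_continuousOn hφcont.neg).integrableOn_compact hcpt).mono_set
        subset_closure
    have hintc : ∀ c : ℝ, IntegrableOn (fun _ => c) Ω volume :=
      fun c => integrableOn_const hfin.ne
    have hJpos : 0 < J := by
      have hle : ∫ y in Ω, exp (φ x₀) ≤ J :=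
        setIntegral_mono_on (hintc _) hInt1 hΩopen.measurableSet
          (fun y hy => exp_le_exp.mpr (hx₀min (subset_closure hy)))
      have heq : ∫ y in Ω, exp (φ x₀) = V * exp (φ x₀) := by
        rw [setIntegral_const, smul_eq_mul, measureReal_def, ← hV]
      rw [heq] at hle
      have : 0 < V * exp (φ x₀) := by positivity
      linarith
    -- Cauchy–Schwarz via AM–GM: V² ≤ J * K
    have hgen : ∀ t : ℝ, 0 < t → 2 * t * V ≤ t ^ 2 * J + K := by
      intro t ht
      have hpt : ∀ y ∈ Ω, 2 * t ≤ t ^ 2 * exp (φ y) + exp (-(φ y)) := by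
        intro y hy
        have hab : exp (φ y) * exp (-(φ y)) = 1 := by
          rw [← exp_add]; simp
        nlinarith [sq_nonneg (t * exp (φ y) - 1), exp_pos (φ y), exp_pos (-(φ y))]
      have hIle : ∫ _ in Ω, (2 * t : ℝ) ≤ ∫ y in Ω, (t ^ 2 * exp (φ y) + exp (-(φ y))) :=
        setIntegral_mono_on (hintc _) ((hInt1.const_mul _).add hInt2)
          hΩopen.measurableSet hpt
      have hL : ∫ _ in Ω, (2 * t : ℝ) = 2 * t * V := by
        rw [setIntegral_const, smul_eq_mul, measureReal_def, ← hV]; ring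
      have hR : ∫ y in Ω, (t ^ 2 * exp (φ y) + exp (-(φ y))) = t ^ 2 * J + K := by
        rw [integral_add (hInt1.const_mul _) hInt2, integral_const_mul]
      rw [hL, hR] at hIle
      exact hIle
    have hCS : V ^ 2 ≤ J * K := by
      have h2 := hgen (V / J) (by positivity)
      have e1 : V / J * J = V := div_mul_cancel₀ _ hJpos.ne'
      have e2 : (V / J) ^ 2 * J = V / J * V := by
        rw [sq]
        rw [mul_assoc, e1]
      rw [e2] at h2
      have h3 : V / J * V ≤ K := by linarith
      have h4 : V / J * V * J ≤ K * J :=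
        mul_le_mul_of_nonneg_right h3 hJpos.le
      calc V ^ 2 = V / J * V * J := by
            rw [mul_comm (V / J) V, mul_assoc, e1, sq]
        _ ≤ K * J := h4
        _ = J * K := mul_comm _ _
    -- PDE at the interior minimum
    have hlap : 0 ≤ lap φ x₀ :=
      lap_nonneg_at_min hΩopen hφC2 hx₀Ω (fun y hy => hx₀min (subset_closure hy))
    have hpde := hPB x₀ hx₀Ω
    have h0 : exp (-(φ x₀)) / Z₁ - I₂ * exp (φ x₀) / J ≤ 0 := by
      rw [← hpde]
      nlinarith
    set m := φ x₀ with hm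
    have hexp : exp m * exp (-m) = 1 := by rw [← exp_add]; simp
    have h1 : exp (-m) * J ≤ I₂ * exp m * Z₁ := by
      have := h0
      rw [sub_nonpos, div_le_div_iff₀ hZ₁ hJpos] at this
      linarith
    have h2 : exp (-m) ^ 2 * J ≤ I₂ * Z₁ := by
      have h1' := mul_le_mul_of_nonneg_left h1 (exp_pos (-m)).le
      calc exp (-m) ^ 2 * J = exp (-m) * (exp (-m) * J) := by ring
        _ ≤ exp (-m) * (I₂ * exp m * Z₁) := h1'
        _ = exp m * exp (-m) * (I₂ * Z₁) := by ring
        _ = I₂ * Z₁ := by rw [hexp]; ring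
    have hKpos : 0 < K := by nlinarith
    have hfinal : exp (-m) ^ 2 ≤ I₂ * Z₁ / V ^ 2 * K := by
      rw [div_mul_eq_mul_div, le_div_iff₀ (by positivity)]
      nlinarith [sq_nonneg (exp (-m))]
    exact (Real.le_sqrt' (exp_pos _)).mpr hfinal
  · -- boundary case
    refine le_max_of_le_right ?_
    have hWmem : W x₀ ∈ W '' frontier Ω := mem_image_of_mem _ hfr
    obtain ⟨C, hC⟩ := hWbdd
    have hbdd : BddBelow (W '' frontier Ω) := by
      refine ⟨-C, ?_⟩
      rintro y ⟨z, _, rfl⟩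
      exact neg_le_of_abs_le (hC z)
    have hsinf : sInf (W '' frontier Ω) ≤ W x₀ := csInf_le hbdd hWmem
    apply exp_le_exp.mpr
    rw [hbc x₀ hfr]
    linarith
end

section
/- Let ε > 0 and let φ be twice continuously differentiable on the open set Ω ⊂ ℝ^d with e^{φ} and e^{-φ} integrable on Ω, and suppose -εΔφ = ρ̃ on Ω, where ρ̃ = e^{-φ}/Z₁ − I₂ e^{φ}/∫_Ω e^{φ} dx with Z₁ > 0 and I₂ > 0. Then the function x ↦ ρ̃(x)² is subharmonic on Ω: Δ(ρ̃²)(x) ≥ 0 for every x ∈ Ω. -/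
open MeasureTheory Real Filter Set Topology

/-- Subharmonicity of `ρ̃²`: if `-εΔφ = ρ̃` on `Ω` with
`ρ̃ = e^{-φ}/Z₁ − I₂ e^{φ}/∫_Ω e^{φ}`, then `Δ(ρ̃²) ≥ 0` on `Ω`. -/
theorem charge_density_squared_subharmonic_selective_blocking
    {d : ℕ} (Ω : Set (EuclideanSpace ℝ (Fin d)))
    (hΩopen : IsOpen Ω) (hΩne : Ω.Nonempty) (hΩbdd : Bornology.IsBounded Ω)
    (ε Z₁ I₂ : ℝ) (hε : 0 < ε) (hZ₁ : 0 < Z₁) (hI₂ : 0 < I₂)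
    (φ : EuclideanSpace ℝ (Fin d) → ℝ) (hφC2 : ContDiffOn ℝ 2 φ Ω)
    (hint₁ : IntegrableOn (fun x => exp (φ x)) Ω)
    (hint₂ : IntegrableOn (fun x => exp (-(φ x))) Ω)
    (ρ : EuclideanSpace ℝ (Fin d) → ℝ)
    (hρ : ∀ x, ρ x = exp (-(φ x)) / Z₁ - I₂ * exp (φ x) / (∫ y in Ω, exp (φ y)))
    (hPB : ∀ x ∈ Ω, -ε * lap φ x = ρ x) :
    ∀ x ∈ Ω, 0 ≤ lap (fun y => ρ y ^ 2) x := by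
  -- positivity of the integral
  have hIpos : 0 < ∫ y in Ω, exp (φ y) := by
    rw [setIntegral_pos_iff_support_of_nonneg_ae
      (Filter.Eventually.of_forall fun y => (exp_pos _).le) hint₁]
    have : Function.support (fun x => exp (φ x)) = Set.univ := by
      ext y; simp [Function.support, (exp_pos (φ y)).ne']
    rw [this, Set.univ_inter]
    exact hΩopen.measure_pos volume hΩne
  set c : ℝ := I₂ / (∫ y in Ω, exp (φ y)) with hcdef
  have hc : 0 < c := div_pos hI₂ hIpos
  set g : ℝ → ℝ := fun t => exp (-t) / Z₁ - c * exp t with hgdef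
  set g1 : ℝ → ℝ := fun t => -(exp (-t) / Z₁) - c * exp t with hg1def
  have hρg : ∀ y, ρ y = g (φ y) := by
    intro y; rw [hρ, hgdef, hcdef]; ring
  have hexpneg : ∀ t : ℝ, HasDerivAt (fun s => exp (-s)) (-exp (-t)) t := by
    intro t
    exact ((Real.hasDerivAt_exp (-t)).comp t (hasDerivAt_neg t)).congr_deriv (by ring)
  have hgd : ∀ t, HasDerivAt g (g1 t) t := by
    intro t
    have := ((hexpneg t).div_const Z₁).sub ((Real.hasDerivAt_exp t).const_mul c)
    exact this.congr_deriv (by simp only [hg1def]; ring)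
  have hg1d : ∀ t, HasDerivAt g1 (g t) t := by
    intro t
    have := (((hexpneg t).div_const Z₁).neg).sub ((Real.hasDerivAt_exp t).const_mul c)
    exact this.congr_deriv (by simp only [hgdef]; ring)
  have hg1neg : ∀ t, g1 t < 0 := by
    intro t
    have h1 : 0 < exp (-t) / Z₁ := div_pos (exp_pos _) hZ₁
    have h2 : 0 < c * exp t := mul_pos hc (exp_pos _)
    simp only [hg1def]; linarith
  intro x hx
  have hmem : Ω ∈ 𝓝 x := hΩopen.mem_nhds hx
  have hφct : ∀ y ∈ Ω, ContDiffAt ℝ 2 φ y := fun y hy => hφC2.contDiffAt (hΩopen.mem_nhds hy)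
  have hφd : ∀ y ∈ Ω, HasFDerivAt φ (fderiv ℝ φ y) y := fun y hy =>
    ((hφct y hy).differentiableAt (by norm_num)).hasFDerivAt
  -- first derivative of ρ on Ω
  have hρd : ∀ y ∈ Ω, HasFDerivAt ρ (g1 (φ y) • fderiv ℝ φ y) y := by
    intro y hy
    have h := (hgd (φ y)).comp_hasFDerivAt y (hφd y hy)
    have hfun : ρ = g ∘ φ := funext hρg
    rw [hfun]; exact h
  -- first derivative of ρ² on Ω
  have hρsq : ∀ y ∈ Ω, HasFDerivAt (fun z => ρ z ^ 2)
      ((2 * ρ y * g1 (φ y)) • fderiv ℝ φ y) y := by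
    intro y hy
    have h := (hρd y hy).mul (hρd y hy)
    have hfun : (fun z => ρ z ^ 2) = fun z => ρ z * ρ z := funext fun z => sq (ρ z)
    rw [hfun]
    refine h.congr_fderiv ?_
    rw [smul_smul, ← add_smul]
    congr 1
    ring
  -- per-direction second derivative computation
  have key : ∀ i : Fin d,
      fderiv ℝ (fun y => fderiv ℝ (fun z => ρ z ^ 2) y (EuclideanSpace.single i 1)) x
        (EuclideanSpace.single i 1)
      = 2 * (g1 (φ x))^2 * (fderiv ℝ φ x (EuclideanSpace.single i 1))^2
        + 2 * ρ x * g (φ x) * (fderiv ℝ φ x (EuclideanSpace.single i 1))^2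
        + 2 * ρ x * g1 (φ x) *
          fderiv ℝ (fun y => fderiv ℝ φ y (EuclideanSpace.single i 1)) x
            (EuclideanSpace.single i 1) := by
    intro i
    set v := EuclideanSpace.single (𝕜 := ℝ) i (1:ℝ) with hv
    set Dv : EuclideanSpace ℝ (Fin d) → ℝ := fun y => fderiv ℝ φ y v with hDv
    -- differentiability of Dv at x
    have hctf : ContDiffAt ℝ 1 (fderiv ℝ φ) x := (hφct x hx).fderiv_right (by norm_num)
    have hDvdiff : DifferentiableAt ℝ Dv x :=
      (hctf.differentiableAt (by norm_num)).clm_apply (differentiableAt_const v)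
    -- rewrite the first derivative function near x
    have heq : (fun y => fderiv ℝ (fun z => ρ z ^ 2) y v)
        =ᶠ[𝓝 x] (fun y => (2 * ρ y * g1 (φ y)) * Dv y) := by
      filter_upwards [hmem] with y hy
      rw [(hρsq y hy).fderiv]
      simp [hDv]
    rw [heq.fderiv_eq]
    -- derivative of the factor 2 * ρ * g1∘φ at x
    have h1 : HasFDerivAt (fun y => 2 * ρ y) ((2:ℝ) • (g1 (φ x) • fderiv ℝ φ x)) x :=
      (hρd x hx).const_mul 2
    have h2 : HasFDerivAt (fun y => g1 (φ y)) (g (φ x) • fderiv ℝ φ x) x :=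
      (hg1d (φ x)).comp_hasFDerivAt x (hφd x hx)
    have h12 := h1.mul h2
    have h3 := h12.mul hDvdiff.hasFDerivAt
    rw [show (fun y => 2 * ρ y * g1 (φ y) * Dv y) = ((fun y => 2 * ρ y) * fun y => g1 (φ y)) * Dv from rfl,
      h3.fderiv, Pi.mul_apply]
    have hDvx : Dv x = fderiv ℝ φ x v := rfl
    simp only [ContinuousLinearMap.add_apply, ContinuousLinearMap.smul_apply, smul_eq_mul,
      hDvx]
    ring
  -- sum over directions
  have hlapφ : lap φ x = -(ρ x) / ε := by
    have := hPB x hx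
    field_simp
    linarith [this]
  have hsum : lap (fun y => ρ y ^ 2) x
      = (2 * (g1 (φ x))^2 + 2 * ρ x * g (φ x)) *
          (∑ i : Fin d, (fderiv ℝ φ x (EuclideanSpace.single i 1))^2)
        + 2 * ρ x * g1 (φ x) * lap φ x := by
    unfold lap
    rw [Finset.mul_sum, Finset.mul_sum, ← Finset.sum_add_distrib]
    refine Finset.sum_congr rfl fun i _ => ?_
    rw [key i]; ring
  rw [hsum, hlapφ]
  have hS : 0 ≤ ∑ i : Fin d, (fderiv ℝ φ x (EuclideanSpace.single i 1))^2 :=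
    Finset.sum_nonneg fun i _ => sq_nonneg _
  have hρx : ρ x = g (φ x) := hρg x
  have hg1x := hg1neg (φ x)
  have ht1 : 0 ≤ (2 * (g1 (φ x))^2 + 2 * ρ x * g (φ x)) *
      (∑ i : Fin d, (fderiv ℝ φ x (EuclideanSpace.single i 1))^2) := by
    apply mul_nonneg _ hS
    rw [hρx]; nlinarith [sq_nonneg (g (φ x)), sq_nonneg (g1 (φ x))]
  have ht2 : 0 ≤ 2 * ρ x * g1 (φ x) * (-(ρ x) / ε) := by
    rw [hρx]
    have : 2 * g (φ x) * g1 (φ x) * (-(g (φ x)) / ε) = 2 * (g (φ x))^2 * (-(g1 (φ x))) / ε := by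
      ring
    rw [this]
    apply div_nonneg _ hε.le
    have : 0 ≤ -(g1 (φ x)) := by linarith
    positivity
  exact add_nonneg ht1 ht2
end

section
/- Maximum principle for the Nernst–Planck system with Dirichlet boundary conditions: under the stated hypotheses, for all x in the closure of Ω, all t ≥ 0, and i = 1, 2, one has c_i(x,t) ≤ Γ, where Γ = max{ sup_{∂Ω} γ₁, sup_{∂Ω} γ₂, sup_{Ω} c₁(·,0), sup_{Ω} c₂(·,0) }. -/
open MeasureTheory Real Filter Set Topology

/-- The divergence: sum of partial derivatives of the components. -/
noncomputable def diverg {d : ℕ} (F : EuclideanSpace ℝ (Fin d) → EuclideanSpace ℝ (Fin d))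
    (x : EuclideanSpace ℝ (Fin d)) : ℝ :=
  ∑ i : Fin d, fderiv ℝ F x (EuclideanSpace.single i 1) i

/-! ### Auxiliary lemmas -/

/-- One-sided derivative test: if `f` attains its maximum over `[0,a]` at `a > 0` and is
differentiable there, then `deriv f a ≥ 0`. -/
lemma NPNS.deriv_nonneg_of_max_left {f : ℝ → ℝ} {a : ℝ} (ha : 0 < a)
    (hf : DifferentiableAt ℝ f a) (h : ∀ t ∈ Set.Ico 0 a, f t ≤ f a) :
    0 ≤ deriv f a := by
  have hd : HasDerivWithinAt f (deriv f a) (Iio a) a :=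
    (hf.hasDerivAt.hasDerivWithinAt)
  rw [hasDerivWithinAt_iff_tendsto_slope] at hd
  have hne : (Iio a \ {a} : Set ℝ) = Iio a := by
    ext t; simp only [mem_diff, mem_Iio, mem_singleton_iff]
    exact ⟨fun h => h.1, fun h => ⟨h, ne_of_lt h⟩⟩
  rw [hne] at hd
  refine ge_of_tendsto hd ?_
  filter_upwards [self_mem_nhdsWithin,
    Ioo_mem_nhdsLT_of_mem (⟨ha, le_refl a⟩ : a ∈ Ioc 0 a)] with t ht ht2
  simp only [mem_Iio] at ht
  have h1 : f t ≤ f a := h t ⟨le_of_lt ht2.1, ht⟩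
  have hs : slope f a t = (f t - f a) / (t - a) := by
    rw [slope_comm, slope_def_field]; rw [div_eq_div_iff (by linarith) (by linarith)]; ring
  rw [hs]
  exact div_nonneg_iff.2 (Or.inr ⟨by linarith, by linarith⟩)

/-- Second-order directional derivative test at an interior maximum. -/
lemma NPNS.secondDirDeriv_nonpos {E : Type*} [NormedAddCommGroup E] [NormedSpace ℝ E]
    {Ω : Set E} (hΩ : IsOpen Ω) {f : E → ℝ} (hf : ContDiffOn ℝ (⊤ : ℕ∞) f Ω)
    {x : E} (hx : x ∈ Ω) (hmax : IsMaxOn f Ω x) (v : E) :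
    fderiv ℝ (fun y => fderiv ℝ f y v) x v ≤ 0 := by
  by_contra hL
  push_neg at hL
  set g : E → ℝ := fun y => fderiv ℝ f y v with hg
  set L : ℝ := fderiv ℝ g x v with hLdef
  have hF : ContDiffOn ℝ (⊤ : ℕ∞) (fderiv ℝ f) Ω := hf.fderiv_of_isOpen hΩ (by simp)
  have hgdiff : ∀ y ∈ Ω, DifferentiableAt ℝ g y := by
    intro y hy
    have h1 : DifferentiableAt ℝ (fderiv ℝ f) y :=
      ((hF y hy).contDiffAt (hΩ.mem_nhds hy)).differentiableAt (by simp)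
    exact (ContinuousLinearMap.apply ℝ ℝ v).differentiableAt.comp y h1
  have hfdiff : ∀ y ∈ Ω, DifferentiableAt ℝ f y := fun y hy =>
    ((hf y hy).contDiffAt (hΩ.mem_nhds hy)).differentiableAt (by simp)
  have hloc : IsLocalMax f x := hmax.isLocalMax (hΩ.mem_nhds hx)
  have hf0 : fderiv ℝ f x = 0 := hloc.fderiv_eq_zero
  have hg0 : g x = 0 := by simp [hg, hf0]
  set A : ℝ → E := fun s => x + s • v with hA
  have hAderiv : ∀ s : ℝ, HasDerivAt A v s := by
    intro s
    have := ((hasDerivAt_id s).smul_const v).const_add x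
    rwa [one_smul] at this
  have hA0 : A 0 = x := by simp [hA]
  set ψ : ℝ → ℝ := fun s => g (A s) with hψ
  have hψs : ∀ s : ℝ, A s ∈ Ω → HasDerivAt ψ (fderiv ℝ g (A s) v) s := fun s hs =>
    ((hgdiff _ hs).hasFDerivAt).comp_hasDerivAt s (hAderiv s)
  have hψ0 : HasDerivAt ψ L 0 := by
    have := hψs 0 (by rw [hA0]; exact hx)
    rwa [hA0] at this
  have hslope : Tendsto (slope ψ 0) (𝓝[≠] 0) (𝓝 L) :=
    hasDerivAt_iff_tendsto_slope.1 hψ0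
  have hpos : ∀ᶠ s in 𝓝[>] (0:ℝ), 0 < ψ s := by
    have h1 : Tendsto (slope ψ 0) (𝓝[>] 0) (𝓝 L) :=
      hslope.mono_left (nhdsWithin_mono 0 (fun s hs => ne_of_gt hs))
    have h2 : ∀ᶠ s in 𝓝[>] (0:ℝ), 0 < slope ψ 0 s :=
      h1.eventually (eventually_gt_nhds hL)
    filter_upwards [h2, self_mem_nhdsWithin] with s hs hs'
    simp only [mem_Ioi] at hs'
    have : slope ψ 0 s = ψ s / s := by
      rw [slope_def_field]; rw [hψ]; simp [hg0, hA0]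
    rw [this] at hs
    exact (div_pos_iff.1 hs).elim (fun h => h.1) (fun h => absurd hs' (not_lt.2 h.2.le))
  have hmem : ∀ᶠ s in 𝓝[>] (0:ℝ), A s ∈ Ω := by
    have hc : ContinuousAt A 0 := (hAderiv 0).continuousAt
    have : ∀ᶠ s in 𝓝 (0:ℝ), A s ∈ Ω := hc.preimage_mem_nhds (by rw [hA0]; exact hΩ.mem_nhds hx)
    exact this.filter_mono nhdsWithin_le_nhds
  obtain ⟨η, hη, hsub⟩ := mem_nhdsGT_iff_exists_Ioc_subset.1 (hpos.and hmem)
  simp only [mem_Ioi] at hη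
  have hIoc : ∀ s ∈ Ioc (0:ℝ) η, 0 < ψ s ∧ A s ∈ Ω := fun s hs => hsub hs
  have hIcc : ∀ s ∈ Icc (0:ℝ) η, A s ∈ Ω := by
    intro s hs
    rcases eq_or_lt_of_le hs.1 with h | h
    · rw [← h]; rw [hA0]; exact hx
    · exact (hIoc s ⟨h, hs.2⟩).2
  set φ : ℝ → ℝ := fun s => f (A s) with hφ
  have hφd : ∀ s ∈ Icc (0:ℝ) η, HasDerivAt φ (fderiv ℝ f (A s) v) s := fun s hs =>
    ((hfdiff _ (hIcc s hs)).hasFDerivAt).comp_hasDerivAt s (hAderiv s)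
  have hφcont : ContinuousOn φ (Icc 0 η) := fun s hs =>
    ((hφd s hs).continuousAt).continuousWithinAt
  have hmono : StrictMonoOn φ (Icc 0 η) := by
    apply strictMonoOn_of_deriv_pos (convex_Icc 0 η) hφcont
    intro s hs
    rw [interior_Icc] at hs
    have hs' : s ∈ Icc (0:ℝ) η := ⟨hs.1.le, hs.2.le⟩
    rw [(hφd s hs').deriv]
    exact (hIoc s ⟨hs.1, hs.2.le⟩).1
  have h1 : φ 0 < φ η := hmono (left_mem_Icc.2 hη.le) (right_mem_Icc.2 hη.le) hη
  have h2 : φ η ≤ φ 0 := by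
    have := hmax (hIcc η (right_mem_Icc.2 hη.le))
    simpa [hφ, hA0] using this
  linarith

lemma NPNS.grad_apply {d : ℕ} (f : EuclideanSpace ℝ (Fin d) → ℝ) (y : EuclideanSpace ℝ (Fin d)) (i : Fin d) :
    gradient f y i = fderiv ℝ f y (EuclideanSpace.single i 1) := by
  have h1 : gradient f y i = @inner ℝ _ _ (gradient f y) (EuclideanSpace.single i (1:ℝ)) := by
    rw [EuclideanSpace.inner_single_right]; simp
  rw [h1]
  exact InnerProductSpace.toDual_symm_apply

lemma NPNS.gradient_eq_zero_of_fderiv_eq_zero {E : Type*} [NormedAddCommGroup E]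
    [InnerProductSpace ℝ E] [CompleteSpace E] {f : E → ℝ} {x : E}
    (h : fderiv ℝ f x = 0) : gradient f x = 0 := by
  unfold gradient; rw [h]; exact map_zero _

lemma NPNS.grad_diffAt {d : ℕ} {Ω : Set (EuclideanSpace ℝ (Fin d))} (hΩ : IsOpen Ω)
    {f : EuclideanSpace ℝ (Fin d) → ℝ} (hf : ContDiffOn ℝ (⊤ : ℕ∞) f Ω)
    {x : EuclideanSpace ℝ (Fin d)} (hx : x ∈ Ω) :
    DifferentiableAt ℝ (fun y => gradient f y) x := by
  have hF : ContDiffOn ℝ (⊤ : ℕ∞) (fderiv ℝ f) Ω := hf.fderiv_of_isOpen hΩ (by simp)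
  have h1 : DifferentiableAt ℝ (fderiv ℝ f) x :=
    ((hF x hx).contDiffAt (hΩ.mem_nhds hx)).differentiableAt (by simp)
  exact ((InnerProductSpace.toDual ℝ (EuclideanSpace ℝ (Fin d))).symm.toContinuousLinearEquiv.differentiableAt).comp x h1

lemma NPNS.fderiv_grad_comp {d : ℕ} {Ω : Set (EuclideanSpace ℝ (Fin d))} (hΩ : IsOpen Ω)
    {f : EuclideanSpace ℝ (Fin d) → ℝ} (hf : ContDiffOn ℝ (⊤ : ℕ∞) f Ω)
    {x : EuclideanSpace ℝ (Fin d)} (hx : x ∈ Ω) (i : Fin d) (e : EuclideanSpace ℝ (Fin d)) :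
    (fderiv ℝ (fun y => gradient f y) x e) i
      = fderiv ℝ (fun y => fderiv ℝ f y (EuclideanSpace.single i 1)) x e := by
  have hg : DifferentiableAt ℝ (fun y => gradient f y) x := NPNS.grad_diffAt hΩ hf hx
  have h1 : fderiv ℝ (fun y => (gradient f y) i) x e = (fderiv ℝ (fun y => gradient f y) x e) i := by
    have h := (EuclideanSpace.proj (𝕜 := ℝ) i).hasFDerivAt.comp x hg.hasFDerivAt
    have h2 : (fun y => (gradient f y) i) = ⇑(EuclideanSpace.proj (𝕜 := ℝ) i) ∘ fun y => gradient f y := rfl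
    rw [h2, h.fderiv]
    rfl
  rw [← h1]
  congr 1
  apply Filter.EventuallyEq.fderiv_eq
  filter_upwards with y
  exact NPNS.grad_apply f y i

/-- Expansion of the divergence of `∇f + c∇φ` at a point where `∇f` and `∇c` vanish. -/
lemma NPNS.diverg_grad_add_smul {d : ℕ} {Ω : Set (EuclideanSpace ℝ (Fin d))} (hΩ : IsOpen Ω)
    {f c φf : EuclideanSpace ℝ (Fin d) → ℝ}
    (hf : ContDiffOn ℝ (⊤ : ℕ∞) f Ω) (hc : ContDiffOn ℝ (⊤ : ℕ∞) c Ω) (hφ : ContDiffOn ℝ (⊤ : ℕ∞) φf Ω)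
    {x : EuclideanSpace ℝ (Fin d)} (hx : x ∈ Ω) (hc0 : fderiv ℝ c x = 0) :
    diverg (fun y => gradient f y + c y • gradient φf y) x = lap f x + c x * lap φf x := by
  have hgf : DifferentiableAt ℝ (fun y => gradient f y) x := NPNS.grad_diffAt hΩ hf hx
  have hgφ : DifferentiableAt ℝ (fun y => gradient φf y) x := NPNS.grad_diffAt hΩ hφ hx
  have hcd : DifferentiableAt ℝ c x :=
    ((hc x hx).contDiffAt (hΩ.mem_nhds hx)).differentiableAt (by simp)
  have hcc : HasFDerivAt c (0 : EuclideanSpace ℝ (Fin d) →L[ℝ] ℝ) x := by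
    have := hcd.hasFDerivAt; rwa [hc0] at this
  set Df := fderiv ℝ (fun y => gradient f y) x with hDf
  set Dφ := fderiv ℝ (fun y => gradient φf y) x with hDφ
  have hsm : HasFDerivAt (fun y => c y • gradient φf y)
      (c x • Dφ + (0 : EuclideanSpace ℝ (Fin d) →L[ℝ] ℝ).smulRight (gradient φf x)) x :=
    hcc.smul hgφ.hasFDerivAt
  have hG : HasFDerivAt (fun y => gradient f y + c y • gradient φf y)
      (Df + (c x • Dφ + (0 : EuclideanSpace ℝ (Fin d) →L[ℝ] ℝ).smulRight (gradient φf x))) x :=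
    hgf.hasFDerivAt.add hsm
  rw [diverg, lap, lap]
  have key : ∀ i : Fin d,
      fderiv ℝ (fun y => gradient f y + c y • gradient φf y) x (EuclideanSpace.single i 1) i
        = fderiv ℝ (fun y => fderiv ℝ f y (EuclideanSpace.single i 1)) x (EuclideanSpace.single i 1)
          + c x * fderiv ℝ (fun y => fderiv ℝ φf y (EuclideanSpace.single i 1)) x (EuclideanSpace.single i 1) := by
    intro i
    rw [hG.fderiv]
    have h1 := NPNS.fderiv_grad_comp hΩ hf hx i (EuclideanSpace.single i 1)
    have h2 := NPNS.fderiv_grad_comp hΩ hφ hx i (EuclideanSpace.single i 1)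
    rw [← h1, ← h2, hDf, hDφ]
    simp [ContinuousLinearMap.add_apply, ContinuousLinearMap.smul_apply]
  rw [Finset.sum_congr rfl (fun i _ => key i), Finset.sum_add_distrib, ← Finset.mul_sum]

lemma NPNS.slice_space_smooth {d : ℕ} {Ω : Set (EuclideanSpace ℝ (Fin d))}
    {h : EuclideanSpace ℝ (Fin d) → ℝ → ℝ}
    (hsm : ContDiffOn ℝ (⊤ : ℕ∞) (fun p : EuclideanSpace ℝ (Fin d) × ℝ => h p.1 p.2) (Ω ×ˢ Ioi (0:ℝ)))
    {t : ℝ} (ht : 0 < t) : ContDiffOn ℝ (⊤ : ℕ∞) (fun y => h y t) Ω := by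
  have hmap : Set.MapsTo (fun y : EuclideanSpace ℝ (Fin d) => (y, t)) Ω (Ω ×ˢ Ioi (0:ℝ)) :=
    fun y hy => ⟨hy, ht⟩
  exact hsm.comp ((contDiff_id.prodMk contDiff_const).contDiffOn) hmap

lemma NPNS.slice_time_diff {d : ℕ} {Ω : Set (EuclideanSpace ℝ (Fin d))} (hΩ : IsOpen Ω)
    {h : EuclideanSpace ℝ (Fin d) → ℝ → ℝ}
    (hsm : ContDiffOn ℝ (⊤ : ℕ∞) (fun p : EuclideanSpace ℝ (Fin d) × ℝ => h p.1 p.2) (Ω ×ˢ Ioi (0:ℝ)))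
    {x : EuclideanSpace ℝ (Fin d)} (hx : x ∈ Ω) {t : ℝ} (ht : 0 < t) :
    DifferentiableAt ℝ (h x) t := by
  have hopen : IsOpen (Ω ×ˢ Ioi (0:ℝ)) := hΩ.prod isOpen_Ioi
  have hmem : (x, t) ∈ Ω ×ˢ Ioi (0:ℝ) := ⟨hx, ht⟩
  have h1 : DifferentiableAt ℝ (fun p : EuclideanSpace ℝ (Fin d) × ℝ => h p.1 p.2) (x, t) :=
    ((hsm _ hmem).contDiffAt (hopen.mem_nhds hmem)).differentiableAt (by simp)
  have h2 : DifferentiableAt ℝ (fun s : ℝ => ((x, s) : EuclideanSpace ℝ (Fin d) × ℝ)) t :=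
    (differentiable_const x).differentiableAt.prodMk differentiable_id.differentiableAt
  exact h1.comp t h2

/-- Maximum principle for the Nernst–Planck–Navier–Stokes system with Dirichlet
boundary conditions: the ionic concentrations never exceed
`Γ = max{sup_{∂Ω} γ₁, sup_{∂Ω} γ₂, sup_Ω c₁(0), sup_Ω c₂(0)}`. -/
theorem max_principle_dirichlet_NPNS
    {d : ℕ} (hd : d = 2 ∨ d = 3)
    (Ω : Set (EuclideanSpace ℝ (Fin d)))
    (hΩopen : IsOpen Ω) (hΩne : Ω.Nonempty) (hΩbdd : Bornology.IsBounded Ω)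
    (ε D₁ D₂ : ℝ) (hε : 0 < ε) (hD₁ : 0 < D₁) (hD₂ : 0 < D₂)
    (c₁ c₂ Φ : EuclideanSpace ℝ (Fin d) → ℝ → ℝ)
    (u : EuclideanSpace ℝ (Fin d) → ℝ → EuclideanSpace ℝ (Fin d))
    (hc₁cont : ContinuousOn (fun p : EuclideanSpace ℝ (Fin d) × ℝ => c₁ p.1 p.2)
      (closure Ω ×ˢ Ici (0:ℝ)))
    (hc₂cont : ContinuousOn (fun p : EuclideanSpace ℝ (Fin d) × ℝ => c₂ p.1 p.2)
      (closure Ω ×ˢ Ici (0:ℝ)))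
    (hΦcont : ContinuousOn (fun p : EuclideanSpace ℝ (Fin d) × ℝ => Φ p.1 p.2)
      (closure Ω ×ˢ Ici (0:ℝ)))
    (hucont : ContinuousOn (fun p : EuclideanSpace ℝ (Fin d) × ℝ => u p.1 p.2)
      (closure Ω ×ˢ Ici (0:ℝ)))
    (hc₁smooth : ContDiffOn ℝ (⊤ : ℕ∞) (fun p : EuclideanSpace ℝ (Fin d) × ℝ => c₁ p.1 p.2)
      (Ω ×ˢ Ioi (0:ℝ)))
    (hc₂smooth : ContDiffOn ℝ (⊤ : ℕ∞) (fun p : EuclideanSpace ℝ (Fin d) × ℝ => c₂ p.1 p.2)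
      (Ω ×ˢ Ioi (0:ℝ)))
    (hΦsmooth : ContDiffOn ℝ (⊤ : ℕ∞) (fun p : EuclideanSpace ℝ (Fin d) × ℝ => Φ p.1 p.2)
      (Ω ×ˢ Ioi (0:ℝ)))
    (husmooth : ContDiffOn ℝ (⊤ : ℕ∞) (fun p : EuclideanSpace ℝ (Fin d) × ℝ => u p.1 p.2)
      (Ω ×ˢ Ioi (0:ℝ)))
    -- Nernst–Planck equation for the cations (z₁ = 1)
    (hNP₁ : ∀ x ∈ Ω, ∀ t > (0:ℝ),
      deriv (c₁ x) t + (inner ℝ (u x t) (gradient (fun y => c₁ y t) x) : ℝ)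
        = D₁ * diverg (fun y => gradient (fun z => c₁ z t) y
            + c₁ y t • gradient (fun z => Φ z t) y) x)
    -- Nernst–Planck equation for the anions (z₂ = -1)
    (hNP₂ : ∀ x ∈ Ω, ∀ t > (0:ℝ),
      deriv (c₂ x) t + (inner ℝ (u x t) (gradient (fun y => c₂ y t) x) : ℝ)
        = D₂ * diverg (fun y => gradient (fun z => c₂ z t) y
            - c₂ y t • gradient (fun z => Φ z t) y) x)
    -- Poisson equation
    (hPoisson : ∀ x ∈ Ω, ∀ t > (0:ℝ),
      -ε * lap (fun y => Φ y t) x = c₁ x t - c₂ x t)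
    -- incompressibility
    (hdivu : ∀ x ∈ Ω, ∀ t > (0:ℝ), diverg (fun y => u y t) x = 0)
    -- boundary conditions
    (γ₁ γ₂ : EuclideanSpace ℝ (Fin d) → ℝ)
    (hγ₁smooth : ContDiff ℝ (⊤ : ℕ∞) γ₁) (hγ₂smooth : ContDiff ℝ (⊤ : ℕ∞) γ₂)
    (hγ₁pos : ∀ x ∈ frontier Ω, 0 < γ₁ x) (hγ₂pos : ∀ x ∈ frontier Ω, 0 < γ₂ x)
    (hubc : ∀ x ∈ frontier Ω, ∀ t ≥ (0:ℝ), u x t = 0)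
    (hc₁bc : ∀ x ∈ frontier Ω, ∀ t ≥ (0:ℝ), c₁ x t = γ₁ x)
    (hc₂bc : ∀ x ∈ frontier Ω, ∀ t ≥ (0:ℝ), c₂ x t = γ₂ x)
    (Γ : ℝ)
    (hΓ : Γ = max (max (sSup (γ₁ '' frontier Ω)) (sSup (γ₂ '' frontier Ω)))
        (max (sSup ((fun x => c₁ x 0) '' Ω)) (sSup ((fun x => c₂ x 0) '' Ω)))) :
    ∀ x ∈ closure Ω, ∀ t ≥ (0:ℝ), c₁ x t ≤ Γ ∧ c₂ x t ≤ Γ := by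
  -- ### Preliminaries
  have hclos : IsCompact (closure Ω) :=
    Metric.isCompact_of_isClosed_isBounded isClosed_closure hΩbdd.closure
  have hfrc : IsCompact (frontier Ω) :=
    hclos.of_isClosed_subset isClosed_frontier frontier_subset_closure
  -- frontier is nonempty
  have hfrne : (frontier Ω).Nonempty := by
    by_contra hfe
    rw [Set.not_nonempty_iff_eq_empty] at hfe
    have hclosed : IsClosed Ω := by
      have h1 : closure Ω ⊆ Ω := by
        intro y hy
        by_contra hyΩ
        have : y ∈ frontier Ω := ⟨hy, by rwa [hΩopen.interior_eq]⟩
        rw [hfe] at this; exact this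
      exact closure_subset_iff_isClosed.1 h1
    rcases isClopen_iff.1 ⟨hclosed, hΩopen⟩ with h | h
    · exact hΩne.ne_empty h
    · obtain ⟨R, hR⟩ := isBounded_iff_forall_norm_le.1 hΩbdd
      have hi : (0 : ℕ) < d := by rcases hd with h' | h' <;> omega
      have h1 := hR (EuclideanSpace.single (⟨0, hi⟩ : Fin d) (R + 1)) (h ▸ mem_univ _)
      rw [EuclideanSpace.norm_single, Real.norm_eq_abs] at h1
      have h2 : R + 1 ≤ |R + 1| := le_abs_self _
      linarith
  -- suprema are genuine bounds
  have bddγ₁ : BddAbove (γ₁ '' frontier Ω) := (hfrc.image hγ₁smooth.continuous).bddAbove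
  have bddγ₂ : BddAbove (γ₂ '' frontier Ω) := (hfrc.image hγ₂smooth.continuous).bddAbove
  have hcont0 : ∀ (c : EuclideanSpace ℝ (Fin d) → ℝ → ℝ),
      ContinuousOn (fun p : EuclideanSpace ℝ (Fin d) × ℝ => c p.1 p.2) (closure Ω ×ˢ Ici (0:ℝ)) →
      ContinuousOn (fun x => c x 0) (closure Ω) := by
    intro c hc
    have hmap : Set.MapsTo (fun x : EuclideanSpace ℝ (Fin d) => (x, (0:ℝ)))
        (closure Ω) (closure Ω ×ˢ Ici (0:ℝ)) := fun x hx => ⟨hx, Set.self_mem_Ici⟩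
    exact hc.comp ((continuous_id.prodMk continuous_const).continuousOn) hmap
  have bdd01 : BddAbove ((fun x => c₁ x 0) '' Ω) :=
    ((hclos.image_of_continuousOn (hcont0 c₁ hc₁cont)).bddAbove).mono
      (image_mono subset_closure)
  have bdd02 : BddAbove ((fun x => c₂ x 0) '' Ω) :=
    ((hclos.image_of_continuousOn (hcont0 c₂ hc₂cont)).bddAbove).mono
      (image_mono subset_closure)
  have hbγ₁ : ∀ x ∈ frontier Ω, γ₁ x ≤ Γ := fun x hx => by
    rw [hΓ]
    exact le_trans (le_csSup bddγ₁ (mem_image_of_mem _ hx)) (le_max_of_le_left (le_max_left _ _))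
  have hbγ₂ : ∀ x ∈ frontier Ω, γ₂ x ≤ Γ := fun x hx => by
    rw [hΓ]
    exact le_trans (le_csSup bddγ₂ (mem_image_of_mem _ hx)) (le_max_of_le_left (le_max_right _ _))
  have hinit₁ : ∀ x ∈ Ω, c₁ x 0 ≤ Γ := fun x hx => by
    rw [hΓ]
    exact le_trans (le_csSup bdd01 (mem_image_of_mem _ hx)) (le_max_of_le_right (le_max_left _ _))
  have hinit₂ : ∀ x ∈ Ω, c₂ x 0 ≤ Γ := fun x hx => by
    rw [hΓ]
    exact le_trans (le_csSup bdd02 (mem_image_of_mem _ hx)) (le_max_of_le_right (le_max_right _ _))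
  have hΓpos : 0 < Γ := by
    obtain ⟨z, hz⟩ := hfrne
    exact lt_of_lt_of_le (hγ₁pos z hz) (hbγ₁ z hz)
  have hbd₁ : ∀ x ∈ frontier Ω, ∀ t ≥ (0:ℝ), c₁ x t ≤ Γ := fun x hx t ht => by
    rw [hc₁bc x hx t ht]; exact hbγ₁ x hx
  have hbd₂ : ∀ x ∈ frontier Ω, ∀ t ≥ (0:ℝ), c₂ x t ≤ Γ := fun x hx t ht => by
    rw [hc₂bc x hx t ht]; exact hbγ₂ x hx
  have hsubΩ : ∀ y ∈ closure Ω, y ∉ frontier Ω → y ∈ Ω := by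
    intro y hy hyf
    by_contra hyΩ
    exact hyf ⟨hy, by rwa [hΩopen.interior_eq]⟩
  -- ### Main argument: by contradiction
  by_contra hcon
  push_neg at hcon
  obtain ⟨x₀, hx₀, t₀, ht₀, hbad⟩ := hcon
  have hM0 : Γ < max (c₁ x₀ t₀) (c₂ x₀ t₀) := by
    rcases lt_or_ge Γ (c₁ x₀ t₀) with h | h
    · exact lt_of_lt_of_le h (le_max_left _ _)
    · exact lt_of_lt_of_le (hbad h) (le_max_right _ _)
  -- t₀ must be positive
  have ht₀pos : 0 < t₀ := by
    rcases eq_or_lt_of_le ht₀ with h | h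
    · exfalso
      by_cases hx₀Ω : x₀ ∈ Ω
      · have h2 := max_le (hinit₁ x₀ hx₀Ω) (hinit₂ x₀ hx₀Ω)
        rw [← h] at hM0; exact absurd hM0 (not_lt.2 h2)
      · have hxf : x₀ ∈ frontier Ω := by
          by_contra hf; exact hx₀Ω (hsubΩ x₀ hx₀ hf)
        have h2 := max_le (hbd₁ x₀ hxf t₀ ht₀) (hbd₂ x₀ hxf t₀ ht₀)
        exact absurd hM0 (not_lt.2 h2)
    · exact h
  set M0 := max (c₁ x₀ t₀) (c₂ x₀ t₀) with hM0def
  set δ : ℝ := (M0 - Γ) / (2 * t₀) with hδdef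
  have hδpos : 0 < δ := div_pos (by linarith) (by linarith)
  set K : Set (EuclideanSpace ℝ (Fin d) × ℝ) := closure Ω ×ˢ Icc (0:ℝ) t₀ with hKdef
  have hKcomp : IsCompact K := hclos.prod isCompact_Icc
  have hKmem : (x₀, t₀) ∈ K := ⟨hx₀, ⟨ht₀, le_refl _⟩⟩
  have hKsub : K ⊆ closure Ω ×ˢ Ici (0:ℝ) := prod_mono_right Icc_subset_Ici_self
  set F : EuclideanSpace ℝ (Fin d) × ℝ → ℝ :=
    fun p => max (c₁ p.1 p.2) (c₂ p.1 p.2) - δ * p.2 with hFdef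
  have hFc : ContinuousOn F K := by
    apply ContinuousOn.sub
    · exact ((hc₁cont.mono hKsub).sup (hc₂cont.mono hKsub))
    · exact (continuous_const.mul continuous_snd).continuousOn
  obtain ⟨p, hpK, hpmax⟩ := hKcomp.exists_isMaxOn ⟨(x₀, t₀), hKmem⟩ hFc
  obtain ⟨xs, ts⟩ := p
  have hxscl : xs ∈ closure Ω := hpK.1
  have hts0 : 0 ≤ ts := hpK.2.1
  have htsT : ts ≤ t₀ := hpK.2.2
  have hδt₀ : δ * t₀ = (M0 - Γ) / 2 := by
    rw [hδdef]; field_simp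
  have hFΓ : Γ < F (xs, ts) := by
    have h1 : F (x₀, t₀) ≤ F (xs, ts) := hpmax hKmem
    have h2 : F (x₀, t₀) = M0 - δ * t₀ := rfl
    rw [h2, hδt₀] at h1
    have h3 : Γ < M0 - (M0 - Γ) / 2 := by linarith
    exact lt_of_lt_of_le h3 h1
  -- the max point is interior in space
  have hxsΩ : xs ∈ Ω := by
    apply hsubΩ xs hxscl
    intro hxf
    have h1 : F (xs, ts) ≤ Γ := by
      have e1 : c₁ xs ts = γ₁ xs := hc₁bc xs hxf ts hts0
      have e2 : c₂ xs ts = γ₂ xs := hc₂bc xs hxf ts hts0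
      have : max (c₁ xs ts) (c₂ xs ts) ≤ Γ := by
        rw [e1, e2]; exact max_le (hbγ₁ xs hxf) (hbγ₂ xs hxf)
      have hδts : 0 ≤ δ * ts := mul_nonneg hδpos.le hts0
      show max (c₁ xs ts) (c₂ xs ts) - δ * ts ≤ Γ
      linarith
    linarith
  -- and interior in time
  have htspos : 0 < ts := by
    rcases eq_or_lt_of_le hts0 with h | h
    · exfalso
      have h1 : F (xs, ts) ≤ Γ := by
      -- ts = 0
        have := max_le (hinit₁ xs hxsΩ) (hinit₂ xs hxsΩ)
        show max (c₁ xs ts) (c₂ xs ts) - δ * ts ≤ Γ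
        rw [← h]
        simpa using this
      linarith
    · exact h
  -- ### Interior contradiction
  exfalso
  rcases le_total (c₂ xs ts) (c₁ xs ts) with hcase | hcase
  · -- c₁ attains the max
    have hmaxval : max (c₁ xs ts) (c₂ xs ts) = c₁ xs ts := max_eq_left hcase
    have hfs : ContDiffOn ℝ (⊤ : ℕ∞) (fun y => c₁ y ts) Ω := NPNS.slice_space_smooth hc₁smooth htspos
    have hφss : ContDiffOn ℝ (⊤ : ℕ∞) (fun y => Φ y ts) Ω := NPNS.slice_space_smooth hΦsmooth htspos
    have hmaxsp : IsMaxOn (fun y => c₁ y ts) Ω xs := by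
      intro x hxΩ
      have h1 : F (x, ts) ≤ F (xs, ts) := hpmax ⟨subset_closure hxΩ, ⟨hts0, htsT⟩⟩
      have h2 : c₁ x ts - δ * ts ≤ max (c₁ x ts) (c₂ x ts) - δ * ts := by
        have := le_max_left (c₁ x ts) (c₂ x ts); linarith
      have h3 : F (xs, ts) = c₁ xs ts - δ * ts := by
        show max (c₁ xs ts) (c₂ xs ts) - δ * ts = _; rw [hmaxval]
      simp only [mem_setOf_eq]
      have h4 : F (x, ts) = max (c₁ x ts) (c₂ x ts) - δ * ts := rfl
      rw [h4] at h1; rw [h3] at h1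
      linarith
    have hf0 : fderiv ℝ (fun y => c₁ y ts) xs = 0 :=
      (hmaxsp.isLocalMax (hΩopen.mem_nhds hxsΩ)).fderiv_eq_zero
    have hgrad0 : gradient (fun y => c₁ y ts) xs = 0 :=
      NPNS.gradient_eq_zero_of_fderiv_eq_zero hf0
    have hlapf : lap (fun y => c₁ y ts) xs ≤ 0 := by
      apply Finset.sum_nonpos
      intro i _
      exact NPNS.secondDirDeriv_nonpos hΩopen hfs hxsΩ hmaxsp _
    have hlapφ : lap (fun y => Φ y ts) xs = (c₂ xs ts - c₁ xs ts) / ε := by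
      have := hPoisson xs hxsΩ ts htspos
      field_simp
      linarith
    have hdiv : diverg (fun y => gradient (fun z => c₁ z ts) y
        + c₁ y ts • gradient (fun z => Φ z ts) y) xs
        = lap (fun y => c₁ y ts) xs + c₁ xs ts * lap (fun y => Φ y ts) xs :=
      NPNS.diverg_grad_add_smul hΩopen hfs hfs hφss hxsΩ hf0
    have hc₁pos : 0 < c₁ xs ts := by
      have h3 : F (xs, ts) = c₁ xs ts - δ * ts := by
        show max (c₁ xs ts) (c₂ xs ts) - δ * ts = _; rw [hmaxval]
      have hδts : 0 ≤ δ * ts := mul_nonneg hδpos.le hts0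
      rw [h3] at hFΓ
      linarith
    have hRHS : D₁ * diverg (fun y => gradient (fun z => c₁ z ts) y
        + c₁ y ts • gradient (fun z => Φ z ts) y) xs ≤ 0 := by
      rw [hdiv, hlapφ]
      have h2 : c₁ xs ts * ((c₂ xs ts - c₁ xs ts) / ε) ≤ 0 :=
        mul_nonpos_of_nonneg_of_nonpos hc₁pos.le
          (div_nonpos_iff.2 (Or.inr ⟨sub_nonpos.2 hcase, hε.le⟩))
      exact mul_nonpos_of_nonneg_of_nonpos hD₁.le (by linarith)
    have hderiv : δ ≤ deriv (c₁ xs) ts := by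
      have hdiffat : DifferentiableAt ℝ (c₁ xs) ts :=
        NPNS.slice_time_diff hΩopen hc₁smooth hxsΩ htspos
      have hq : HasDerivAt (fun t => c₁ xs t - δ * t) (deriv (c₁ xs) ts - δ) ts := by
        have hlin : HasDerivAt (fun t : ℝ => δ * t) δ ts := by
          simpa using (hasDerivAt_id ts).const_mul δ
        exact hdiffat.hasDerivAt.sub hlin
      have hmono : ∀ t ∈ Ico (0:ℝ) ts, c₁ xs t - δ * t ≤ c₁ xs ts - δ * ts := by
        intro t htm
        have hK' : ((xs, t) : EuclideanSpace ℝ (Fin d) × ℝ) ∈ K :=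
          ⟨hxscl, ⟨htm.1, le_trans htm.2.le htsT⟩⟩
        have h1 : F (xs, t) ≤ F (xs, ts) := hpmax hK'
        have h2 : c₁ xs t - δ * t ≤ F (xs, t) := by
          show _ ≤ max (c₁ xs t) (c₂ xs t) - δ * t
          have := le_max_left (c₁ xs t) (c₂ xs t); linarith
        have h3 : F (xs, ts) = c₁ xs ts - δ * ts := by
          show max (c₁ xs ts) (c₂ xs ts) - δ * ts = _; rw [hmaxval]
        rw [h3] at h1
        linarith
      have h0 : 0 ≤ deriv (fun t => c₁ xs t - δ * t) ts := by
        apply NPNS.deriv_nonneg_of_max_left htspos hq.differentiableAt hmono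
      rw [hq.deriv] at h0
      linarith
    have hNP := hNP₁ xs hxsΩ ts htspos
    have hinner : (inner ℝ (u xs ts) (gradient (fun y => c₁ y ts) xs) : ℝ) = 0 := by
      rw [hgrad0]; exact inner_zero_right _
    rw [hinner] at hNP
    rw [add_zero] at hNP
    rw [hNP] at hderiv
    linarith
  · -- c₂ attains the max: symmetric argument
    have hmaxval : max (c₁ xs ts) (c₂ xs ts) = c₂ xs ts := max_eq_right hcase
    have hfs : ContDiffOn ℝ (⊤ : ℕ∞) (fun y => c₂ y ts) Ω := NPNS.slice_space_smooth hc₂smooth htspos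
    have hφss : ContDiffOn ℝ (⊤ : ℕ∞) (fun y => Φ y ts) Ω := NPNS.slice_space_smooth hΦsmooth htspos
    have hmaxsp : IsMaxOn (fun y => c₂ y ts) Ω xs := by
      intro x hxΩ
      have h1 : F (x, ts) ≤ F (xs, ts) := hpmax ⟨subset_closure hxΩ, ⟨hts0, htsT⟩⟩
      have h2 : c₂ x ts - δ * ts ≤ max (c₁ x ts) (c₂ x ts) - δ * ts := by
        have := le_max_right (c₁ x ts) (c₂ x ts); linarith
      have h3 : F (xs, ts) = c₂ xs ts - δ * ts := by
        show max (c₁ xs ts) (c₂ xs ts) - δ * ts = _; rw [hmaxval]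
      simp only [mem_setOf_eq]
      have h4 : F (x, ts) = max (c₁ x ts) (c₂ x ts) - δ * ts := rfl
      rw [h4] at h1; rw [h3] at h1
      linarith
    have hf0 : fderiv ℝ (fun y => c₂ y ts) xs = 0 :=
      (hmaxsp.isLocalMax (hΩopen.mem_nhds hxsΩ)).fderiv_eq_zero
    have hgrad0 : gradient (fun y => c₂ y ts) xs = 0 :=
      NPNS.gradient_eq_zero_of_fderiv_eq_zero hf0
    have hlapf : lap (fun y => c₂ y ts) xs ≤ 0 := by
      apply Finset.sum_nonpos
      intro i _
      exact NPNS.secondDirDeriv_nonpos hΩopen hfs hxsΩ hmaxsp _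
    have hlapφ : lap (fun y => Φ y ts) xs = (c₂ xs ts - c₁ xs ts) / ε := by
      have := hPoisson xs hxsΩ ts htspos
      field_simp
      linarith
    have hfuneq : (fun y => gradient (fun z => c₂ z ts) y - c₂ y ts • gradient (fun z => Φ z ts) y)
        = fun y => gradient (fun z => c₂ z ts) y + (fun w => -(c₂ w ts)) y • gradient (fun z => Φ z ts) y := by
      funext y
      rw [neg_smul, ← sub_eq_add_neg]
    have hcneg : ContDiffOn ℝ (⊤ : ℕ∞) (fun w => -(c₂ w ts)) Ω := hfs.neg
    have hcneg0 : fderiv ℝ (fun w => -(c₂ w ts)) xs = 0 := by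
      have : (fun w => -(c₂ w ts)) = fun w => -((fun y => c₂ y ts) w) := rfl
      rw [this, fderiv_fun_neg, hf0, neg_zero]
    have hdiv : diverg (fun y => gradient (fun z => c₂ z ts) y
        - c₂ y ts • gradient (fun z => Φ z ts) y) xs
        = lap (fun y => c₂ y ts) xs + (-(c₂ xs ts)) * lap (fun y => Φ y ts) xs := by
      rw [hfuneq]
      exact NPNS.diverg_grad_add_smul hΩopen hfs hcneg hφss hxsΩ hcneg0
    have hc₂pos : 0 < c₂ xs ts := by
      have h3 : F (xs, ts) = c₂ xs ts - δ * ts := by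
        show max (c₁ xs ts) (c₂ xs ts) - δ * ts = _; rw [hmaxval]
      have hδts : 0 ≤ δ * ts := mul_nonneg hδpos.le hts0
      rw [h3] at hFΓ
      linarith
    have hRHS : D₂ * diverg (fun y => gradient (fun z => c₂ z ts) y
        - c₂ y ts • gradient (fun z => Φ z ts) y) xs ≤ 0 := by
      rw [hdiv, hlapφ]
      have h2 : (-(c₂ xs ts)) * ((c₂ xs ts - c₁ xs ts) / ε) ≤ 0 := by
        rw [neg_mul]
        apply neg_nonpos_of_nonneg
        exact mul_nonneg hc₂pos.le (div_nonneg (sub_nonneg.2 hcase) hε.le)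
      exact mul_nonpos_of_nonneg_of_nonpos hD₂.le (by linarith)
    have hderiv : δ ≤ deriv (c₂ xs) ts := by
      have hdiffat : DifferentiableAt ℝ (c₂ xs) ts :=
        NPNS.slice_time_diff hΩopen hc₂smooth hxsΩ htspos
      have hq : HasDerivAt (fun t => c₂ xs t - δ * t) (deriv (c₂ xs) ts - δ) ts := by
        have hlin : HasDerivAt (fun t : ℝ => δ * t) δ ts := by
          simpa using (hasDerivAt_id ts).const_mul δ
        exact hdiffat.hasDerivAt.sub hlin
      have hmono : ∀ t ∈ Ico (0:ℝ) ts, c₂ xs t - δ * t ≤ c₂ xs ts - δ * ts := by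
        intro t htm
        have hK' : ((xs, t) : EuclideanSpace ℝ (Fin d) × ℝ) ∈ K :=
          ⟨hxscl, ⟨htm.1, le_trans htm.2.le htsT⟩⟩
        have h1 : F (xs, t) ≤ F (xs, ts) := hpmax hK'
        have h2 : c₂ xs t - δ * t ≤ F (xs, t) := by
          show _ ≤ max (c₁ xs t) (c₂ xs t) - δ * t
          have := le_max_right (c₁ xs t) (c₂ xs t); linarith
        have h3 : F (xs, ts) = c₂ xs ts - δ * ts := by
          show max (c₁ xs ts) (c₂ xs ts) - δ * ts = _; rw [hmaxval]
        rw [h3] at h1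
        linarith
      have h0 : 0 ≤ deriv (fun t => c₂ xs t - δ * t) ts := by
        apply NPNS.deriv_nonneg_of_max_left htspos hq.differentiableAt hmono
      rw [hq.deriv] at h0
      linarith
    have hNP := hNP₂ xs hxsΩ ts htspos
    have hinner : (inner ℝ (u xs ts) (gradient (fun y => c₂ y ts) xs) : ℝ) = 0 := by
      rw [hgrad0]; exact inner_zero_right _
    rw [hinner] at hNP
    rw [add_zero] at hNP
    rw [hNP] at hderiv
    linarith
end

section
/- Let m : [0,∞) → ℝ be Lipschitz on [0,T] for every T > 0, and define M(t) = max_{0 ≤ s ≤ t} m(s). Suppose that for some t > 0 both M and m are differentiable at t and M'(t) > 0. Then M(t) = m(t) and M'(t) = m'(t). -/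
open MeasureTheory Real Filter Set Topology

/-- If `m` is locally Lipschitz on `[0,∞)`, `M(t) = max_{0 ≤ s ≤ t} m(s)`, and both `M`
and `m` are differentiable at some `t > 0` with `M'(t) > 0`, then `M(t) = m(t)` and
`M'(t) = m'(t)`. -/
theorem running_max_derivative
    (m : ℝ → ℝ)
    (hLip : ∀ T > (0:ℝ), ∃ L : NNReal, LipschitzOnWith L m (Set.Icc 0 T))
    (M : ℝ → ℝ) (hM : ∀ t ≥ (0:ℝ), IsGreatest (m '' Set.Icc 0 t) (M t))
    (t : ℝ) (ht : 0 < t)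
    (M' m' : ℝ) (hMd : HasDerivAt M M' t) (hmd : HasDerivAt m m' t)
    (hM'pos : 0 < M') :
    M t = m t ∧ M' = m' := by
  -- m ≤ M on [0,∞)
  have hmle : ∀ s, 0 ≤ s → m s ≤ M s := fun s hs =>
    (hM s hs).2 ⟨s, ⟨hs, le_rfl⟩, rfl⟩
  -- M is monotone on [0,∞)
  have hmono : ∀ a b : ℝ, 0 ≤ a → a ≤ b → M a ≤ M b := by
    intro a b ha hab
    obtain ⟨x, hx, hxa⟩ := (hM a ha).1
    exact hxa ▸ (hM b (ha.trans hab)).2 ⟨x, ⟨hx.1, hx.2.trans hab⟩, rfl⟩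
  -- First: M t = m t
  have hMt : M t = m t := by
    by_contra hne
    have hlt : m t < M t := lt_of_le_of_ne (hmle t ht.le) (Ne.symm hne)
    obtain ⟨L, hL⟩ := hLip (t + 1) (by linarith)
    have hc : ContinuousAt m t :=
      hL.continuousOn.continuousAt (Icc_mem_nhds ht (by linarith))
    have hev : ∀ᶠ s in 𝓝 t, m s < M t := hc (Iio_mem_nhds hlt)
    rw [Metric.eventually_nhds_iff] at hev
    obtain ⟨δ, hδ, hball⟩ := hev
    have hev' : ∀ᶠ s in 𝓝[Set.Ici t] t, M s = M t := by
      have : Set.Ico t (t + δ) ∈ 𝓝[Set.Ici t] t :=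
        mem_nhdsWithin.2 ⟨Set.Iio (t + δ), isOpen_Iio, Set.mem_Iio.2 (by linarith),
          fun x hx => ⟨hx.2, hx.1⟩⟩
      filter_upwards [this] with s hs
      refine le_antisymm ?_ (hmono t s ht.le hs.1)
      obtain ⟨x, hx, hxM⟩ := (hM s (ht.le.trans hs.1)).1
      rcases le_or_gt x t with hxt | hxt
      · exact hxM ▸ (hM t ht.le).2 ⟨x, ⟨hx.1, hxt⟩, rfl⟩
      · have : dist x t < δ := by
          rw [Real.dist_eq, abs_of_nonneg (by linarith)]
          have := hx.2
          have := hs.2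
          linarith
        exact hxM ▸ (hball this).le
    have h1 : HasDerivWithinAt M M' (Set.Ici t) t := hMd.hasDerivWithinAt
    have h2 : HasDerivWithinAt (fun _ => M t) M' (Set.Ici t) t :=
      h1.congr_of_eventuallyEq (hev'.mono fun s hs => hs.symm) rfl
    have h3 : M' = 0 := by
      have := h2.derivWithin (uniqueDiffOn_Ici t t Set.self_mem_Ici)
      rw [derivWithin_fun_const] at this
      exact this.symm
    exact absurd h3 (ne_of_gt hM'pos)
  refine ⟨hMt, ?_⟩
  -- Second: local min of M - m at t
  have hlocmin : IsLocalMin (fun s => M s - m s) t := by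
    filter_upwards [eventually_gt_nhds ht] with s hs
    have := hmle s hs.le
    simp only [hMt]
    linarith
  have hd : HasDerivAt (fun s => M s - m s) (M' - m') t := hMd.sub hmd
  have := hlocmin.hasDerivAt_eq_zero hd
  linarith
end

section
/- Let Ω ⊂ ℝ^d be a nonempty bounded open set and let c : (closure of Ω) × [0,∞) → ℝ be continuous with a continuous time partial derivative ∂_t c. Define m(t) = max_{x ∈ closure of Ω} c(x,t), and for each t let B_t = { x in the closure of Ω : c(x,t) = m(t) }. If m is differentiable at some t > 0, then ∂_t c(x,t) = m'(t) for every x ∈ B_t. -/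
open MeasureTheory Real Filter Set Topology

/-- If `m(t) = max_{x ∈ closure Ω} c(x,t)` is differentiable at `t > 0`, then at every
point `x` of the maximizing set `B_t = {x ∈ closure Ω : c(x,t) = m(t)}` the time
partial derivative satisfies `∂_t c(x,t) = m'(t)`. -/
theorem time_derivative_at_maximizers
    {d : ℕ} (Ω : Set (EuclideanSpace ℝ (Fin d)))
    (hΩopen : IsOpen Ω) (hΩne : Ω.Nonempty) (hΩbdd : Bornology.IsBounded Ω)
    (c : EuclideanSpace ℝ (Fin d) → ℝ → ℝ)
    (hccont : ContinuousOn (fun p : EuclideanSpace ℝ (Fin d) × ℝ => c p.1 p.2)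
      (closure Ω ×ˢ Ici (0:ℝ)))
    (ct : EuclideanSpace ℝ (Fin d) → ℝ → ℝ)
    (hct : ∀ x ∈ closure Ω, ∀ s ≥ (0:ℝ), HasDerivAt (c x) (ct x s) s)
    (hctcont : ContinuousOn (fun p : EuclideanSpace ℝ (Fin d) × ℝ => ct p.1 p.2)
      (closure Ω ×ˢ Ici (0:ℝ)))
    (m : ℝ → ℝ)
    (hm : ∀ s ≥ (0:ℝ), IsGreatest ((fun x => c x s) '' closure Ω) (m s))
    (t : ℝ) (ht : 0 < t)
    (m' : ℝ) (hmd : HasDerivAt m m' t) :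
    ∀ x ∈ closure Ω, c x t = m t → ct x t = m' := by
  intro x hx hxt
  have hg : HasDerivAt (fun s => c x s - m s) (ct x t - m') t :=
    (hct x hx t ht.le).sub hmd
  have hmax : IsLocalMax (fun s => c x s - m s) t := by
    filter_upwards [Ioi_mem_nhds ht] with s hs
    have h1 : c x s ≤ m s := (hm s (le_of_lt hs)).2 ⟨x, hx, rfl⟩
    simp [hxt]
    linarith
  have := hmax.hasDerivAt_eq_zero hg
  linarith
end
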